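/- arXiv:1602.07837 — 9 statements merged into one kernel-verified Lean document; each statement's English description precedes it below -/
import Mathlib

section
/- For all integers m and n, the operators L_m satisfy the (p,q)-deformed Virasoro–Witt relation q^m p^{−n} L_m ∘ L_n − q^n p^{−m} L_n ∘ L_m = −(q p^{−1})^m [n−m]_{p,q} L_{m+n} as K-linear endomorphisms of V. -/
/-- For all integers `m` and `n`, the Fock-realization operators `L m`
(with `L m (e k) = -p^(m+k) [k]_{p,q} e_{m+k}`) satisfy the `(p,q)`-deformed
Virasoro–Witt relation
`q^m p^(-n) • L m ∘ L n - q^n p^(-m) • L n ∘ L m = -(q p⁻¹)^m [n-m]_{p,q} • L (m+n)`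
as `K`-linear endomorphisms of `V = ℤ →₀ K`. -/
theorem pq_deformed_virasoro_witt_relation
    {K : Type*} [Field K] (p q : K) (hp : p ≠ 0) (hq : q ≠ 0)
    (hpq : q - p⁻¹ ≠ 0)
    (L : ℤ → ((ℤ →₀ K) →ₗ[K] (ℤ →₀ K)))
    (hL : ∀ m k : ℤ, L m (Finsupp.single k 1) =
      (-(p ^ (m + k) * ((q ^ k - p ^ (-k)) / (q - p⁻¹)))) • Finsupp.single (m + k) (1 : K))
    (m n : ℤ) :
    (q ^ m * p ^ (-n)) • (L m ∘ₗ L n) - (q ^ n * p ^ (-m)) • (L n ∘ₗ L m) =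
      (-((q * p⁻¹) ^ m * ((q ^ (n - m) - p ^ (-(n - m))) / (q - p⁻¹)))) • L (m + n) := by
  apply Finsupp.lhom_ext
  intro k b
  have hb : (Finsupp.single k b : ℤ →₀ K) = b • Finsupp.single k 1 := by
    rw [Finsupp.smul_single, smul_eq_mul, mul_one]
  rw [hb]
  simp only [map_smul]
  congr 1
  simp only [LinearMap.sub_apply, LinearMap.smul_apply, LinearMap.comp_apply, hL, map_smul,
    smul_smul]
  simp only [Finsupp.smul_single, smul_eq_mul, mul_one]
  have h1 : m + (n + k) = m + n + k := by ring
  have h2 : n + (m + k) = m + n + k := by ring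
  rw [h1, h2, ← Finsupp.single_sub]
  refine congrArg (Finsupp.single (m + n + k)) ?_
  -- scalar identity
  have c1 : p ^ k * p ^ (-k) = 1 := by rw [← zpow_add₀ hp]; simp
  have c2 : p ^ m * p ^ (-m) = 1 := by rw [← zpow_add₀ hp]; simp
  have c3 : q ^ m * q ^ (-m) = 1 := by rw [← zpow_add₀ hq]; simp
  have num : q ^ m * p ^ k * (q ^ (n + k) - p ^ (-(n + k))) -
      q ^ n * p ^ k * (q ^ (m + k) - p ^ (-(m + k))) =
      q ^ m * p ^ (-m) * (q ^ (n - m) - p ^ (-(n - m))) := by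
    rw [zpow_add₀ hq n k, show -(n + k) = -n + -k by ring, zpow_add₀ hp,
      zpow_add₀ hq m k, show -(m + k) = -m + -k by ring, zpow_add₀ hp,
      show n - m = n + -m by ring, zpow_add₀ hq,
      show -(n + -m) = m + -n by ring, zpow_add₀ hp]
    linear_combination (q ^ n * p ^ (-m) - q ^ m * p ^ (-n)) * c1 -
      q ^ n * p ^ (-m) * c3 + q ^ m * p ^ (-n) * c2
  have inner : q ^ m * p ^ k * ((q ^ (n + k) - p ^ (-(n + k))) / (q - p⁻¹)) -
      q ^ n * p ^ k * ((q ^ (m + k) - p ^ (-(m + k))) / (q - p⁻¹)) =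
      q ^ m * p ^ (-m) * ((q ^ (n - m) - p ^ (-(n - m))) / (q - p⁻¹)) := by
    linear_combination num / (q - p⁻¹)
  have f1 : p ^ (-n) * p ^ (n + k) = p ^ k := by
    rw [← zpow_add₀ hp]; congr 1; ring
  have f2 : p ^ (-m) * p ^ (m + k) = p ^ k := by
    rw [← zpow_add₀ hp]; congr 1; ring
  have f3 : (q * p⁻¹) ^ m = q ^ m * p ^ (-m) := by
    rw [mul_zpow, inv_zpow, ← zpow_neg]
  set Bk := (q ^ k - p ^ (-k)) / (q - p⁻¹) with hBk
  set Bnk := (q ^ (n + k) - p ^ (-(n + k))) / (q - p⁻¹) with hBnk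
  set Bmk := (q ^ (m + k) - p ^ (-(m + k))) / (q - p⁻¹) with hBmk
  set Bnm := (q ^ (n - m) - p ^ (-(n - m))) / (q - p⁻¹) with hBnm
  linear_combination p ^ (m + n + k) * Bk * inner +
    p ^ (m + n + k) * Bk * q ^ m * Bnk * f1 -
    p ^ (m + n + k) * Bk * q ^ n * Bmk * f2 -
    p ^ (m + n + k) * Bk * Bnm * f3
end

section
/- Define the deformed commutator of operators by [A,B]_{(u,v)} = u·A∘B − v·B∘A for scalars u, v ∈ K. Then for all integers m, n, k the operators L_m satisfy the (p,q)-deformed Jacobi identity: (q^m + p^{−m})·[L_m, [L_n, L_k]_{(q^n p^{−k}, q^k p^{−n})}]_{(q^m p^{−(n+k)}, q^{n+k} p^{−m})} + (q^n + p^{−n})·[L_n, [L_k, L_m]_{(q^k p^{−m}, q^m p^{−k})}]_{(q^n p^{−(k+m)}, q^{k+m} p^{−n})} + (q^k + p^{−k})·[L_k, [L_m, L_n]_{(q^m p^{−n}, q^n p^{−m})}]_{(q^k p^{−(m+n)}, q^{m+n} p^{−k})} = 0 as endomorphisms of V. -/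
/-- The deformed commutator `[A,B]_{(u,v)} = u·A∘B − v·B∘A` of endomorphisms. -/
noncomputable def defComm {K : Type*} [Field K] (u v : K)
    (A B : (ℤ →₀ K) →ₗ[K] (ℤ →₀ K)) : (ℤ →₀ K) →ₗ[K] (ℤ →₀ K) :=
  u • (A ∘ₗ B) - v • (B ∘ₗ A)

set_option maxHeartbeats 2000000 in
lemma key_scalar {K : Type*} [Field K] (A B C E A' B' C' E' d : K)
    (hA : A ≠ 0) (hB : B ≠ 0) (hC : C ≠ 0) (hd : d ≠ 0) :
 (A' + A⁻¹) *
          (A' * (B⁻¹ * C⁻¹) *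
              (B' * C⁻¹ * (-((C * E * E' - C) / d) * -((B * (C * E) * (C' * E') - B) / d)) *
                  -((A * B * C * E * (B' * (C' * E')) - A) / d) -
                C' * B⁻¹ * (-((B * E * E' - B) / d) * -((C * (B * E) * (B' * E') - C) / d)) *
                  -((A * B * C * E * (C' * (B' * E')) - A) / d)) -
            B' * C' * A⁻¹ * -((A * E * E' - A) / d) *
              (B' * C⁻¹ *
                  (-((C * (A * E) * (A' * E') - C) / d) *
                    -((A * B * C * E * (C' * (A' * E')) - B) / d)) -
                C' * B⁻¹ *
                  (-((B * (A * E) * (A' * E') - B) / d) *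
                    -((A * B * C * E * (B' * (A' * E')) - C) / d)))) +
        (B' + B⁻¹) *
          (B' * (C⁻¹ * A⁻¹) *
              (C' * A⁻¹ * (-((A * E * E' - A) / d) * -((C * (A * E) * (A' * E') - C) / d)) *
                  -((A * B * C * E * (C' * (A' * E')) - B) / d) -
                A' * C⁻¹ * (-((C * E * E' - C) / d) * -((A * (C * E) * (C' * E') - A) / d)) *
                  -((A * B * C * E * (A' * (C' * E')) - B) / d)) -
            C' * A' * B⁻¹ * -((B * E * E' - B) / d) *
              (C' * A⁻¹ *
                  (-((A * (B * E) * (B' * E') - A) / d) *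
                    -((A * B * C * E * (A' * (B' * E')) - C) / d)) -
                A' * C⁻¹ *
                  (-((C * (B * E) * (B' * E') - C) / d) *
                    -((A * B * C * E * (C' * (B' * E')) - A) / d)))) +
      (C' + C⁻¹) *
        (C' * (A⁻¹ * B⁻¹) *
            (A' * B⁻¹ * (-((B * E * E' - B) / d) * -((A * (B * E) * (B' * E') - A) / d)) *
                -((A * B * C * E * (A' * (B' * E')) - C) / d) -
              B' * A⁻¹ * (-((A * E * E' - A) / d) * -((B * (A * E) * (A' * E') - B) / d)) *
                -((A * B * C * E * (B' * (A' * E')) - C) / d)) -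
          A' * B' * C⁻¹ * -((C * E * E' - C) / d) *
            (A' * B⁻¹ *
                (-((B * (C * E) * (C' * E') - B) / d) * -((A * B * C * E * (B' * (C' * E')) - A) / d)) -
              B' * A⁻¹ *
                (-((A * (C * E) * (C' * E') - A) / d) *
                  -((A * B * C * E * (A' * (C' * E')) - B) / d)))) =
    0 := by

  have hiA := mul_inv_cancel₀ hA
  have hiB := mul_inv_cancel₀ hB
  have hiC := mul_inv_cancel₀ hC
  linear_combination ((-1)*B*C^2*E*A'*B'*C'^2*E'*B⁻¹*C⁻¹*d⁻¹^3 + (-1)*B*C^2*E*A'*B'^2*C'^2*E'*C⁻¹*d⁻¹^3 + B*C^2*E^2*A'*B'*C'^2*E'^2*B⁻¹*C⁻¹*d⁻¹^3 + B*C^2*E^2*A'*B'^2*C'^2*E'^2*C⁻¹*d⁻¹^3 + B^2*C*E*A'*B'^2*C'*E'*B⁻¹*C⁻¹*d⁻¹^3 + B^2*C*E*A'*B'^2*C'^2*E'*B⁻¹*d⁻¹^3 + (-1)*B^2*C*E^2*A'*B'^2*C'*E'^2*B⁻¹*C⁻¹*d⁻¹^3 + (-1)*B^2*C*E^2*A'*B'^2*C'^2*E'^2*B⁻¹*d⁻¹^3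 + B^2*C^2*E*A'*B'*C'^2*E'*B⁻¹^2*C⁻¹*d⁻¹^3 + (-1)*B^2*C^2*E*A'*B'^2*C'*E'*B⁻¹*C⁻¹^2*d⁻¹^3 + (-1)*B^2*C^2*E^2*A'*B'*C'^2*E'^2*B⁻¹^2*C⁻¹*d⁻¹^3 + B^2*C^2*E^2*A'*B'^2*C'*E'^2*B⁻¹*C⁻¹^2*d⁻¹^3 + B^2*C^3*E^2*A'*B'^2*C'^2*E'^2*B⁻¹*C⁻¹^2*d⁻¹^3 + (-1)*B^2*C^3*E^3*A'*B'^2*C'^2*E'^3*B⁻¹*C⁻¹^2*d⁻¹^3 + (-1)*B^3*C^2*E^2*A'*B'^2*C'^2*E'^2*B⁻¹^2*C⁻¹*d⁻¹^3 + B^3*C^2*E^3*A'*B'^2*C'^2*E'^3*B⁻¹^2*C⁻¹*d⁻¹^3 + (-1)*A*B*C*E*A'^2*B'*C'^2*E'*B⁻¹*d⁻¹^3 + A*B*C*E*A'^2*B'^2*C'*E'*C⁻¹*d⁻¹^3 + A*B*C*E^2*A'^2*B'*C'^2*E'^2*B⁻¹*d⁻¹^3 + (-1)*A*B*C*E^2*A'^2*B'^2*C'*E'^2*C⁻¹*d⁻¹^3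 + (-1)*A*B*C^2*E*A'*B'*C'^2*E'*A⁻¹*B⁻¹*C⁻¹*d⁻¹^3 + A*B*C^2*E*A'^2*B'*C'*E'*B⁻¹*C⁻¹^2*d⁻¹^3 + A*B*C^2*E^2*A'*B'*C'^2*E'^2*A⁻¹*B⁻¹*C⁻¹*d⁻¹^3 + (-1)*A*B*C^2*E^2*A'^2*B'*C'*E'^2*B⁻¹*C⁻¹^2*d⁻¹^3 + A*B*C^2*E^2*A'^2*B'*C'^2*E'^2*B⁻¹*C⁻¹*d⁻¹^3 + (-1)*A*B*C^2*E^3*A'^2*B'*C'^2*E'^3*B⁻¹*C⁻¹*d⁻¹^3 + (-1)*A*B*C^3*E^2*A'^2*B'*C'^2*E'^2*B⁻¹*C⁻¹^2*d⁻¹^3 + A*B*C^3*E^2*A'^2*B'^2*C'^3*E'^2*C⁻¹*d⁻¹^3 + A*B*C^3*E^3*A'^2*B'*C'^2*E'^3*B⁻¹*C⁻¹^2*d⁻¹^3 + (-1)*A*B*C^3*E^3*A'^2*B'^2*C'^3*E'^3*C⁻¹*d⁻¹^3 + A*B^2*C*E*A'*B'^2*C'*E'*A⁻¹*B⁻¹*C⁻¹*d⁻¹^3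 + (-1)*A*B^2*C*E*A'^2*B'*C'*E'*B⁻¹^2*C⁻¹*d⁻¹^3 + (-1)*A*B^2*C*E^2*A'*B'^2*C'*E'^2*A⁻¹*B⁻¹*C⁻¹*d⁻¹^3 + A*B^2*C*E^2*A'^2*B'*C'*E'^2*B⁻¹^2*C⁻¹*d⁻¹^3 + (-1)*A*B^2*C*E^2*A'^2*B'^2*C'*E'^2*B⁻¹*C⁻¹*d⁻¹^3 + A*B^2*C*E^3*A'^2*B'^2*C'*E'^3*B⁻¹*C⁻¹*d⁻¹^3 + A*B^3*C*E^2*A'^2*B'^2*C'*E'^2*B⁻¹^2*C⁻¹*d⁻¹^3 + (-1)*A*B^3*C*E^2*A'^2*B'^3*C'^2*E'^2*B⁻¹*d⁻¹^3 + (-1)*A*B^3*C*E^3*A'^2*B'^2*C'*E'^3*B⁻¹^2*C⁻¹*d⁻¹^3 + A*B^3*C*E^3*A'^2*B'^3*C'^2*E'^3*B⁻¹*d⁻¹^3 + A^2*B*C^2*E^2*A'^2*B'*C'^2*E'^2*A⁻¹*B⁻¹*C⁻¹*d⁻¹^3 + (-1)*A^2*B*C^2*E^2*A'^3*B'^2*C'^2*E'^2*C⁻¹*d⁻¹^3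 + (-1)*A^2*B*C^2*E^3*A'^2*B'*C'^2*E'^3*A⁻¹*B⁻¹*C⁻¹*d⁻¹^3 + A^2*B*C^2*E^3*A'^3*B'^2*C'^2*E'^3*C⁻¹*d⁻¹^3 + (-1)*A^2*B^2*C*E^2*A'^2*B'^2*C'*E'^2*A⁻¹*B⁻¹*C⁻¹*d⁻¹^3 + A^2*B^2*C*E^2*A'^3*B'^2*C'^2*E'^2*B⁻¹*d⁻¹^3 + A^2*B^2*C*E^3*A'^2*B'^2*C'*E'^3*A⁻¹*B⁻¹*C⁻¹*d⁻¹^3 + (-1)*A^2*B^2*C*E^3*A'^3*B'^2*C'^2*E'^3*B⁻¹*d⁻¹^3) * hiA +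
    (B*C*E*A'*B'^2*C'*E'*C⁻¹*d⁻¹^3 + B*C*E*A'*B'^2*C'^2*E'*d⁻¹^3 + (-1)*B*C*E^2*A'*B'^2*C'*E'^2*C⁻¹*d⁻¹^3 + (-1)*B*C*E^2*A'*B'^2*C'^2*E'^2*d⁻¹^3 + B*C^2*E*A'*B'*C'^2*E'*B⁻¹*C⁻¹*d⁻¹^3 + (-1)*B*C^2*E*A'*B'^2*C'*E'*C⁻¹^2*d⁻¹^3 + (-1)*B*C^2*E^2*A'*B'*C'^2*E'^2*B⁻¹*C⁻¹*d⁻¹^3 + B*C^2*E^2*A'*B'^2*C'*E'^2*C⁻¹^2*d⁻¹^3 + (-1)*B*C^2*E^2*A'*B'^2*C'^2*E'^2*C⁻¹*d⁻¹^3 + B*C^2*E^3*A'*B'^2*C'^2*E'^3*C⁻¹*d⁻¹^3 + B*C^3*E^2*A'*B'^2*C'^2*E'^2*C⁻¹^2*d⁻¹^3 + (-1)*B*C^3*E^3*A'*B'^2*C'^2*E'^3*C⁻¹^2*d⁻¹^3 + (-1)*B^2*C^2*E^2*A'*B'^2*C'^2*E'^2*B⁻¹*C⁻¹*d⁻¹^3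 + B^2*C^2*E^3*A'*B'^2*C'^2*E'^3*B⁻¹*C⁻¹*d⁻¹^3 + (-1)*A*C*E*A'^2*B'*C'*E'*C⁻¹*d⁻¹^3 + (-1)*A*C*E*A'^2*B'*C'^2*E'*d⁻¹^3 + A*C*E^2*A'^2*B'*C'*E'^2*C⁻¹*d⁻¹^3 + A*C*E^2*A'^2*B'*C'^2*E'^2*d⁻¹^3 + A*C^2*E*A'^2*B'*C'*E'*C⁻¹^2*d⁻¹^3 + A*C^2*E*A'^2*B'*C'^2*E'*C⁻¹*d⁻¹^3 + (-1)*A*C^2*E^2*A'^2*B'*C'*E'^2*C⁻¹^2*d⁻¹^3 + (-1)*A*C^2*E^3*A'^2*B'*C'^2*E'^3*C⁻¹*d⁻¹^3 + (-1)*A*C^3*E^2*A'^2*B'*C'^2*E'^2*C⁻¹^2*d⁻¹^3 + A*C^3*E^3*A'^2*B'*C'^2*E'^3*C⁻¹^2*d⁻¹^3 + (-1)*A*B*C*E*A'^2*B'*C'*E'*B⁻¹*C⁻¹*d⁻¹^3 + (-1)*A*B*C*E*A'^2*B'^2*C'*E'*C⁻¹*d⁻¹^3 + A*B*C*E^2*A'^2*B'*C'*E'^2*B⁻¹*C⁻¹*d⁻¹^3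 + A*B*C*E^2*A'^2*B'^2*C'*E'^2*C⁻¹*d⁻¹^3 + (-1)*A*B*C^3*E^2*A'^2*B'^2*C'^3*E'^2*C⁻¹*d⁻¹^3 + A*B*C^3*E^3*A'^2*B'^2*C'^3*E'^3*C⁻¹*d⁻¹^3 + A*B^2*C*E^2*A'^2*B'^2*C'*E'^2*B⁻¹*C⁻¹*d⁻¹^3 + (-1)*A*B^2*C*E^2*A'^2*B'^3*C'^2*E'^2*d⁻¹^3 + (-1)*A*B^2*C*E^3*A'^2*B'^2*C'*E'^3*B⁻¹*C⁻¹*d⁻¹^3 + A*B^2*C*E^3*A'^2*B'^3*C'^2*E'^3*d⁻¹^3 + A*B^2*C^2*E^2*A'^2*B'^3*C'^2*E'^2*C⁻¹*d⁻¹^3 + (-1)*A*B^2*C^2*E^3*A'^2*B'^3*C'^2*E'^3*C⁻¹*d⁻¹^3 + A^2*B*C*E^2*A'^3*B'^2*C'^2*E'^2*d⁻¹^3 + (-1)*A^2*B*C*E^3*A'^3*B'^2*C'^2*E'^3*d⁻¹^3) * hiB +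
    ((-1)*B*C*E*A'*B'^2*C'*E'*C⁻¹*d⁻¹^3 + (-1)*B*C*E*A'*B'^2*C'^2*E'*d⁻¹^3 + B*C*E^2*A'*B'^2*C'*E'^2*C⁻¹*d⁻¹^3 + B*C*E^2*A'*B'^2*C'^2*E'^2*d⁻¹^3 + B*C^2*E^2*A'*B'^2*C'^2*E'^2*C⁻¹*d⁻¹^3 + (-1)*B*C^2*E^3*A'*B'^2*C'^2*E'^3*C⁻¹*d⁻¹^3 + A*C*E*A'^2*B'*C'*E'*C⁻¹*d⁻¹^3 + A*C*E*A'^2*B'*C'^2*E'*d⁻¹^3 + (-1)*A*C*E^2*A'^2*B'*C'*E'^2*C⁻¹*d⁻¹^3 + (-1)*A*C*E^2*A'^2*B'*C'^2*E'^2*d⁻¹^3 + (-1)*A*C^2*E^2*A'^2*B'*C'^2*E'^2*C⁻¹*d⁻¹^3 + A*C^2*E^3*A'^2*B'*C'^2*E'^3*C⁻¹*d⁻¹^3 + A*B^2*C*E^2*A'^2*B'^3*C'^2*E'^2*d⁻¹^3 + (-1)*A*B^2*C*E^3*A'^2*B'^3*C'^2*E'^3*d⁻¹^3 + (-1)*A^2*B*C*E^2*A'^3*B'^2*C'^2*E'^2*d⁻¹^3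 + A^2*B*C*E^3*A'^3*B'^2*C'^2*E'^3*d⁻¹^3) * hiC

set_option maxHeartbeats 1000000 in
/-- The Fock-realization operators `L m` satisfy the `(p,q)`-deformed
Jacobi identity
`(q^m + p^{−m})·[L_m, [L_n, L_k]_{(q^n p^{−k}, q^k p^{−n})}]_{(q^m p^{−(n+k)}, q^{n+k} p^{−m})}`
plus its cyclic permutations vanishes, as endomorphisms of `V = ℤ →₀ K`. -/
theorem pq_deformed_jacobi_identity
    {K : Type*} [Field K] (p q : K) (hp : p ≠ 0) (hq : q ≠ 0)
    (hpq : q - p⁻¹ ≠ 0)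
    (L : ℤ → ((ℤ →₀ K) →ₗ[K] (ℤ →₀ K)))
    (hL : ∀ m k : ℤ, L m (Finsupp.single k 1) =
      (-(p ^ (m + k) * ((q ^ k - p ^ (-k)) / (q - p⁻¹)))) • Finsupp.single (m + k) (1 : K))
    (m n k : ℤ) :
    (q ^ m + p ^ (-m)) •
        defComm (q ^ m * p ^ (-(n + k))) (q ^ (n + k) * p ^ (-m)) (L m)
          (defComm (q ^ n * p ^ (-k)) (q ^ k * p ^ (-n)) (L n) (L k)) +
      (q ^ n + p ^ (-n)) •
        defComm (q ^ n * p ^ (-(k + m))) (q ^ (k + m) * p ^ (-n)) (L n)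
          (defComm (q ^ k * p ^ (-m)) (q ^ m * p ^ (-k)) (L k) (L m)) +
      (q ^ k + p ^ (-k)) •
        defComm (q ^ k * p ^ (-(m + n))) (q ^ (m + n) * p ^ (-k)) (L k)
          (defComm (q ^ m * p ^ (-n)) (q ^ n * p ^ (-m)) (L m) (L n)) = 0 := by
  have hL' : ∀ a c : ℤ, ∀ b : K, L a (Finsupp.single c b) =
      (b * (-((p ^ (a + c) * q ^ c - p ^ a) / (q - p⁻¹)))) • Finsupp.single (a + c) (1:K) := by
    intro a c b
    have h1 : Finsupp.single c b = b • Finsupp.single c (1:K) := by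
      rw [Finsupp.smul_single, smul_eq_mul, mul_one]
    have h2 : p ^ (a + c) * ((q ^ c - p ^ (-c)) / (q - p⁻¹))
        = (p ^ (a + c) * q ^ c - p ^ a) / (q - p⁻¹) := by
      rw [mul_div_assoc', mul_sub, ← zpow_add₀ hp]
      norm_num
    rw [h1, map_smul, hL, smul_smul, h2]
  apply Finsupp.lhom_ext
  intro j b
  rw [show Finsupp.single j b = b • Finsupp.single j (1:K) by
    rw [Finsupp.smul_single, smul_eq_mul, mul_one]]
  simp only [map_smul]
  congr 1
  simp only [defComm, LinearMap.add_apply, LinearMap.smul_apply, LinearMap.sub_apply,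
    LinearMap.comp_apply, LinearMap.zero_apply, hL', map_smul, map_sub, smul_smul, one_mul]
  simp only [show m+(n+(k+j)) = m+n+k+j from by ring, show m+(k+(n+j)) = m+n+k+j from by ring,
    show n+(k+(m+j)) = m+n+k+j from by ring, show k+(n+(m+j)) = m+n+k+j from by ring,
    show n+(m+(k+j)) = m+n+k+j from by ring, show k+(m+(n+j)) = m+n+k+j from by ring]
  simp only [smul_sub, smul_smul, ← sub_smul, ← add_smul]
  rw [smul_eq_zero]
  left
  simp only [neg_add, zpow_add₀ hp, zpow_add₀ hq, zpow_neg]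
  set A := p ^ m with hAdef
  set B := p ^ n with hBdef
  set C := p ^ k with hCdef
  set E := p ^ j with hEdef
  set A' := q ^ m with hAdef'
  set B' := q ^ n with hBdef'
  set C' := q ^ k with hCdef'
  set E' := q ^ j with hEdef'
  have hA : A ≠ 0 := zpow_ne_zero _ hp
  have hB : B ≠ 0 := zpow_ne_zero _ hp
  have hC : C ≠ 0 := zpow_ne_zero _ hp
  exact key_scalar A B C E A' B' C' E' (q - p⁻¹) hA hB hC hpq
end

section
/- Define the (p,q)-deformed 3-bracket of the generators by [L_m, L_n, L_k] = p^m q^{m−(n+k)} L_m ∘ [L_n, L_k]_{(q^n p^{−k}, q^k p^{−n})} + p^n q^{n−(k+m)} L_n ∘ [L_k, L_m]_{(q^k p^{−m}, q^m p^{−k})} + p^k q^{k−(m+n)} L_k ∘ [L_m, L_n]_{(q^m p^{−n}, q^n p^{−m})}, where [A,B]_{(u,v)} = u·A∘B − v·B∘A. Then for all integers m, n, k one has the closed form [L_m, L_n, L_k] = −(p q^{−1})^{m+n+k}/(q − p^{−1})² · det D · L_{m+n+k} as endomorphisms of V, where D is the 3×3 matrix whose columns are indexed by i ∈ {m, n,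 k} with column entries (p^{−2i}, p^{−i} q^{i}, q^{2i}). -/
section WeightedShift

variable {ι R : Type*} [AddCommSemigroup ι] [CommRing R]

def IsWeightedShift (A : (ι →₀ R) →ₗ[R] (ι →₀ R)) (s : ι) (a : ι → R) : Prop :=
  ∀ j, A (Finsupp.single j 1) = a j • Finsupp.single (s + j) 1

namespace IsWeightedShift

variable {A B : (ι →₀ R) →ₗ[R] (ι →₀ R)} {s t : ι} {a b : ι → R}

theorem ext (hA : IsWeightedShift A s a) (hB : IsWeightedShift B s b) (hab : ∀ j, a j = b j) :
    A = B :=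
  Finsupp.lhom_ext' fun j => LinearMap.ext_ring <| by
    simp only [LinearMap.comp_apply, Finsupp.lsingle_apply, hA j, hB j, hab]

theorem comp (hA : IsWeightedShift A s a) (hB : IsWeightedShift B t b) {r : ι} (hr : s + t = r) :
    IsWeightedShift (A ∘ₗ B) r fun j => b j * a (t + j) := fun j => by
  rw [LinearMap.comp_apply, hB j, map_smul, hA, ← add_assoc, hr, smul_smul]

theorem smul (hA : IsWeightedShift A s a) (c : R) :
    IsWeightedShift (c • A) s fun j => c * a j := fun j => by
  rw [LinearMap.smul_apply, hA j, smul_smul]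

theorem add (hA : IsWeightedShift A s a) (hB : IsWeightedShift B s b) :
    IsWeightedShift (A + B) s fun j => a j + b j := fun j => by
  rw [LinearMap.add_apply, hA j, hB j, add_smul]

theorem sub (hA : IsWeightedShift A s a) (hB : IsWeightedShift B s b) :
    IsWeightedShift (A - B) s fun j => a j - b j := fun j => by
  rw [LinearMap.sub_apply, hA j, hB j, sub_smul]

end IsWeightedShift

theorem IsWeightedShift.defComm {K : Type*} [Field K] {A B : (ℤ →₀ K) →ₗ[K] (ℤ →₀ K)}
    {s t : ℤ} {a b : ℤ → K} (hA : IsWeightedShift A s a) (hB : IsWeightedShift B t b) (u v : K) :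
    IsWeightedShift (defComm u v A B) (s + t)
      fun j => u * (b j * a (t + j)) - v * (a j * b (s + j)) :=
  ((hA.comp hB rfl).smul u).sub ((hB.comp hA (add_comm t s)).smul v)

end WeightedShift

section PQFock

variable {K : Type*} [Field K] (p q : K)

def pqNumber (k : ℤ) : K := (q ^ k - p ^ (-k)) / (q - p⁻¹)

variable {p q}

theorem defComm_pqFock_eq_smul (hp : p ≠ 0) (hq : q ≠ 0) {L : ℤ → (ℤ →₀ K) →ₗ[K] (ℤ →₀ K)}
    (hL : ∀ m, IsWeightedShift (L m) m fun k => -(p ^ (m + k) * pqNumber p q k)) (n k : ℤ) :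
    defComm (q ^ n * p ^ (-k)) (q ^ k * p ^ (-n)) (L n) (L k) =
      ((q ^ n * p ^ (-k) - q ^ k * p ^ (-n)) / (q - p⁻¹)) • L (n + k) := by
  refine ((hL n).defComm (hL k) _ _).ext ((hL (n + k)).smul _) fun j => ?_
  simp only [pqNumber, div_eq_mul_inv]
  generalize (q - p⁻¹)⁻¹ = t
  simp only [zpow_add₀ hp, zpow_add₀ hq, zpow_neg]
  field_simp
  ring

theorem pq_cyclic_sum_eq_det (hp : p ≠ 0) (hq : q ≠ 0) (m n k j : ℤ) :
    p ^ m * q ^ (m - (n + k)) * ((q ^ n * p ^ (-k) - q ^ k * p ^ (-n)) / (q - p⁻¹)) *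
        (p ^ (n + k + j) * pqNumber p q (n + k + j)) +
      p ^ n * q ^ (n - (k + m)) * ((q ^ k * p ^ (-m) - q ^ m * p ^ (-k)) / (q - p⁻¹)) *
        (p ^ (k + m + j) * pqNumber p q (k + m + j)) +
      p ^ k * q ^ (k - (m + n)) * ((q ^ m * p ^ (-n) - q ^ n * p ^ (-m)) / (q - p⁻¹)) *
        (p ^ (m + n + j) * pqNumber p q (m + n + j)) =
    (p * q⁻¹) ^ (m + n + k) / (q - p⁻¹) ^ 2 *
      Matrix.det !![p ^ (-(2 * m)), p ^ (-(2 * n)), p ^ (-(2 * k));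
                    p ^ (-m) * q ^ m, p ^ (-n) * q ^ n, p ^ (-k) * q ^ k;
                    q ^ (2 * m), q ^ (2 * n), q ^ (2 * k)] := by
  simp only [Matrix.det_fin_three, Matrix.of_apply, Matrix.cons_val', Matrix.cons_val_zero,
    Matrix.cons_val_one, Matrix.head_cons, Matrix.head_fin_const, Matrix.empty_val',
    Matrix.cons_val_fin_one, Matrix.cons_val_two, Matrix.tail_cons]
  simp only [pqNumber, div_eq_mul_inv, ← inv_pow]
  generalize (q - p⁻¹)⁻¹ = t
  simp only [two_mul, zpow_add₀ hp, zpow_add₀ hq, zpow_sub₀ hq, zpow_neg, mul_zpow, inv_zpow,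
    neg_add]
  field_simp
  ring

end PQFock

theorem pq_three_bracket_closed_form_general
    {K : Type*} [Field K] (p q : K) (hp : p ≠ 0) (hq : q ≠ 0)
    (L : ℤ → ((ℤ →₀ K) →ₗ[K] (ℤ →₀ K)))
    (hL : ∀ m k : ℤ, L m (Finsupp.single k 1) =
      (-(p ^ (m + k) * ((q ^ k - p ^ (-k)) / (q - p⁻¹)))) • Finsupp.single (m + k) (1 : K))
    (m n k : ℤ) :
    (p ^ m * q ^ (m - (n + k))) •
        (L m ∘ₗ defComm (q ^ n * p ^ (-k)) (q ^ k * p ^ (-n)) (L n) (L k)) +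
      (p ^ n * q ^ (n - (k + m))) •
        (L n ∘ₗ defComm (q ^ k * p ^ (-m)) (q ^ m * p ^ (-k)) (L k) (L m)) +
      (p ^ k * q ^ (k - (m + n))) •
        (L k ∘ₗ defComm (q ^ m * p ^ (-n)) (q ^ n * p ^ (-m)) (L m) (L n)) =
      ((-((p * q⁻¹) ^ (m + n + k)) / (q - p⁻¹) ^ 2) *
        Matrix.det !![p ^ (-(2 * m)), p ^ (-(2 * n)), p ^ (-(2 * k));
                      p ^ (-m) * q ^ m, p ^ (-n) * q ^ n, p ^ (-k) * q ^ k;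
                      q ^ (2 * m), q ^ (2 * n), q ^ (2 * k)]) • L (m + n + k) := by
  have hshift : ∀ m, IsWeightedShift (L m) m fun k => -(p ^ (m + k) * pqNumber p q k) := hL
  have cyclic_term : ∀ a b c : ℤ, a + (b + c) = m + n + k → ∀ x y : K,
      IsWeightedShift (x • y • (L a ∘ₗ L (b + c))) (m + n + k) fun j =>
        x * (y * (-(p ^ (b + c + j) * pqNumber p q j) *
          -(p ^ (a + (b + c + j)) * pqNumber p q (b + c + j)))) :=
    fun a b c h x y => (((hshift a).comp (hshift (b + c)) h).smul y).smul x
  simp only [defComm_pqFock_eq_smul hp hq hshift, LinearMap.comp_smul]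
  refine (((cyclic_term m n k (by ring) _ _).add (cyclic_term n k m (by ring) _ _)).add
    (cyclic_term k m n (by ring) _ _)).ext ((hshift _).smul _) fun j => ?_
  have h := pq_cyclic_sum_eq_det hp hq m n k j
  simp only [zpow_add₀ hp] at h ⊢
  linear_combination (p ^ m * p ^ n * p ^ k * p ^ j * pqNumber p q j) * h

/-- The `(p,q)`-deformed 3-bracket
`[L_m, L_n, L_k] = p^m q^{m−(n+k)} L_m ∘ [L_n,L_k] + p^n q^{n−(k+m)} L_n ∘ [L_k,L_m]
+ p^k q^{k−(m+n)} L_k ∘ [L_m,L_n]` has the closed form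
`−(p q⁻¹)^{m+n+k}/(q−p⁻¹)² · det D · L_{m+n+k}`, where the columns of `D` are
`(p^{−2i}, p^{−i} q^{i}, q^{2i})` for `i ∈ {m,n,k}`. -/
theorem pq_three_bracket_closed_form
    {K : Type*} [Field K] (p q : K) (hp : p ≠ 0) (hq : q ≠ 0)
    (hpq : q - p⁻¹ ≠ 0)
    (L : ℤ → ((ℤ →₀ K) →ₗ[K] (ℤ →₀ K)))
    (hL : ∀ m k : ℤ, L m (Finsupp.single k 1) =
      (-(p ^ (m + k) * ((q ^ k - p ^ (-k)) / (q - p⁻¹)))) • Finsupp.single (m + k) (1 : K))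
    (m n k : ℤ) :
    (p ^ m * q ^ (m - (n + k))) •
        (L m ∘ₗ defComm (q ^ n * p ^ (-k)) (q ^ k * p ^ (-n)) (L n) (L k)) +
      (p ^ n * q ^ (n - (k + m))) •
        (L n ∘ₗ defComm (q ^ k * p ^ (-m)) (q ^ m * p ^ (-k)) (L k) (L m)) +
      (p ^ k * q ^ (k - (m + n))) •
        (L k ∘ₗ defComm (q ^ m * p ^ (-n)) (q ^ n * p ^ (-m)) (L m) (L n)) =
      ((-((p * q⁻¹) ^ (m + n + k)) / (q - p⁻¹) ^ 2) *
        Matrix.det !![p ^ (-(2 * m)), p ^ (-(2 * n)), p ^ (-(2 * k));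
                      p ^ (-m) * q ^ m, p ^ (-n) * q ^ n, p ^ (-k) * q ^ k;
                      q ^ (2 * m), q ^ (2 * n), q ^ (2 * k)]) • L (m + n + k) :=
  pq_three_bracket_closed_form_general p q hp hq L hL m n k
end

section
/- The (p,q)-deformed 3-bracket [L_m, L_n, L_k] = p^m q^{m−(n+k)} L_m ∘ [L_n, L_k]_{(q^n p^{−k}, q^k p^{−n})} + p^n q^{n−(k+m)} L_n ∘ [L_k, L_m]_{(q^k p^{−m}, q^m p^{−k})} + p^k q^{k−(m+n)} L_k ∘ [L_m, L_n]_{(q^m p^{−n}, q^n p^{−m})}, where [A,B]_{(u,v)} = u·A∘B − v·B∘A, is totally skew-symmetric in the indices: for every permutation τ of (m,n,k), [L_{τ(m)}, L_{τ(n)}, L_{τ(k)}] = sign(τ)·[L_m, L_n, L_k] as endomorphisms of V. -/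
noncomputable def threeBracket {K : Type*} [Field K] (p q : K)
    (L : ℤ → ((ℤ →₀ K) →ₗ[K] (ℤ →₀ K))) (m n k : ℤ) : (ℤ →₀ K) →ₗ[K] (ℤ →₀ K) :=
  (p ^ m * q ^ (m - (n + k))) •
      (L m ∘ₗ defComm (q ^ n * p ^ (-k)) (q ^ k * p ^ (-n)) (L n) (L k)) +
    (p ^ n * q ^ (n - (k + m))) •
      (L n ∘ₗ defComm (q ^ k * p ^ (-m)) (q ^ m * p ^ (-k)) (L k) (L m)) +
    (p ^ k * q ^ (k - (m + n))) •
      (L k ∘ₗ defComm (q ^ m * p ^ (-n)) (q ^ n * p ^ (-m)) (L m) (L n))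

lemma tb_swap01 {K : Type*} [Field K] (p q : K)
    (L : ℤ → ((ℤ →₀ K) →ₗ[K] (ℤ →₀ K))) (m n k : ℤ) :
    threeBracket p q L n m k = - threeBracket p q L m n k := by
  unfold threeBracket defComm
  simp only [LinearMap.comp_sub, LinearMap.comp_smul, smul_sub, smul_smul]
  rw [show m - (k + n) = m - (n + k) by ring, show n - (m + k) = n - (k + m) by ring,
      show k - (n + m) = k - (m + n) by ring]
  module

lemma tb_swap12 {K : Type*} [Field K] (p q : K)
    (L : ℤ → ((ℤ →₀ K) →ₗ[K] (ℤ →₀ K))) (m n k : ℤ) :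
    threeBracket p q L m k n = - threeBracket p q L m n k := by
  unfold threeBracket defComm
  simp only [LinearMap.comp_sub, LinearMap.comp_smul, smul_sub, smul_smul]
  rw [show m - (k + n) = m - (n + k) by ring, show n - (m + k) = n - (k + m) by ring,
      show k - (n + m) = k - (m + n) by ring]
  module

lemma perm3_cases (τ : Equiv.Perm (Fin 3)) :
    τ = 1 ∨ τ = Equiv.swap 0 1 ∨ τ = Equiv.swap 1 2 ∨ τ = Equiv.swap 0 2 ∨
    τ = Equiv.swap 0 1 * Equiv.swap 1 2 ∨ τ = Equiv.swap 1 2 * Equiv.swap 0 1 := by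
  revert τ; decide

lemma tb_swap02 {K : Type*} [Field K] (p q : K)
    (L : ℤ → ((ℤ →₀ K) →ₗ[K] (ℤ →₀ K))) (m n k : ℤ) :
    threeBracket p q L k n m = - threeBracket p q L m n k := by
  rw [tb_swap01, tb_swap12, tb_swap01]; abel

lemma tb_cycle {K : Type*} [Field K] (p q : K)
    (L : ℤ → ((ℤ →₀ K) →ₗ[K] (ℤ →₀ K))) (m n k : ℤ) :
    threeBracket p q L n k m = threeBracket p q L m n k := by
  rw [tb_swap01 p q L k n m, tb_swap02 p q L m n k]; abel

/-- The `(p,q)`-deformed 3-bracket is totally skew-symmetric in its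
indices: for every permutation `τ` of the three indices,
`[L_{τ(m)}, L_{τ(n)}, L_{τ(k)}] = sign(τ)·[L_m, L_n, L_k]` as endomorphisms of `V`. -/
theorem pq_three_bracket_skew_symmetric
    {K : Type*} [Field K] (p q : K) (hp : p ≠ 0) (hq : q ≠ 0)
    (hpq : q - p⁻¹ ≠ 0)
    (L : ℤ → ((ℤ →₀ K) →ₗ[K] (ℤ →₀ K)))
    (hL : ∀ m k : ℤ, L m (Finsupp.single k 1) =
      (-(p ^ (m + k) * ((q ^ k - p ^ (-k)) / (q - p⁻¹)))) • Finsupp.single (m + k) (1 : K))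
    (τ : Equiv.Perm (Fin 3)) (i : Fin 3 → ℤ) :
    threeBracket p q L (i (τ 0)) (i (τ 1)) (i (τ 2)) =
      ((Equiv.Perm.sign τ : ℤˣ) : ℤ) • threeBracket p q L (i 0) (i 1) (i 2) := by
  have hs : ∀ x : (ℤ →₀ K) →ₗ[K] (ℤ →₀ K), (-1 : ℤ) • x = -x := fun x => neg_one_zsmul x
  rcases perm3_cases τ with h | h | h | h | h | h <;> subst h
  · rw [show (((Equiv.Perm.sign (1 : Equiv.Perm (Fin 3))) : ℤˣ) : ℤ) = 1 from by decide,
      one_smul]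
    rfl
  · rw [show (Equiv.swap (0:Fin 3) 1) 0 = 1 from by decide,
      show (Equiv.swap (0:Fin 3) 1) 1 = 0 from by decide,
      show (Equiv.swap (0:Fin 3) 1) 2 = 2 from by decide,
      show (((Equiv.Perm.sign (Equiv.swap (0:Fin 3) 1)) : ℤˣ) : ℤ) = -1 from by decide,
      tb_swap01, hs]
  · rw [show (Equiv.swap (1:Fin 3) 2) 0 = 0 from by decide,
      show (Equiv.swap (1:Fin 3) 2) 1 = 2 from by decide,
      show (Equiv.swap (1:Fin 3) 2) 2 = 1 from by decide,
      show (((Equiv.Perm.sign (Equiv.swap (1:Fin 3) 2)) : ℤˣ) : ℤ) = -1 from by decide,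
      tb_swap12, hs]
  · rw [show (Equiv.swap (0:Fin 3) 2) 0 = 2 from by decide,
      show (Equiv.swap (0:Fin 3) 2) 1 = 1 from by decide,
      show (Equiv.swap (0:Fin 3) 2) 2 = 0 from by decide,
      show (((Equiv.Perm.sign (Equiv.swap (0:Fin 3) 2)) : ℤˣ) : ℤ) = -1 from by decide,
      tb_swap02, hs]
  · rw [show (Equiv.swap (0:Fin 3) 1 * Equiv.swap 1 2 : Equiv.Perm (Fin 3)) 0 = 1 from by decide,
      show (Equiv.swap (0:Fin 3) 1 * Equiv.swap 1 2 : Equiv.Perm (Fin 3)) 1 = 2 from by decide,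
      show (Equiv.swap (0:Fin 3) 1 * Equiv.swap 1 2 : Equiv.Perm (Fin 3)) 2 = 0 from by decide,
      show (((Equiv.Perm.sign
          (Equiv.swap (0:Fin 3) 1 * Equiv.swap 1 2 : Equiv.Perm (Fin 3))) : ℤˣ) : ℤ) = 1
        from by decide, tb_cycle, one_smul]
  · rw [show (Equiv.swap (1:Fin 3) 2 * Equiv.swap 0 1 : Equiv.Perm (Fin 3)) 0 = 2 from by decide,
      show (Equiv.swap (1:Fin 3) 2 * Equiv.swap 0 1 : Equiv.Perm (Fin 3)) 1 = 0 from by decide,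
      show (Equiv.swap (1:Fin 3) 2 * Equiv.swap 0 1 : Equiv.Perm (Fin 3)) 2 = 1 from by decide,
      show (((Equiv.Perm.sign
          (Equiv.swap (1:Fin 3) 2 * Equiv.swap 0 1 : Equiv.Perm (Fin 3))) : ℤˣ) : ℤ) = 1
        from by decide, one_smul, ← tb_cycle (m := i 0), tb_cycle]
end

section
/- For n = 3, the structure constants c₃ satisfy the sh-Jacobi identity: for all integers i₁, …, i₅, the sum over all permutations σ of {1,…,5} of sign(σ) · c₃(i_{σ(1)}, i_{σ(2)}, i_{σ(3)}) · c₃(i_{σ(1)}+i_{σ(2)}+i_{σ(3)}, i_{σ(4)}, i_{σ(5)}) equals 0. Equivalently, the (p,q)-deformed Virasoro–Witt 3-bracket satisfies Σ_{σ ∈ Sh(3,2)} (−1)^{ε(σ)} [[X_{σ(1)}, X_{σ(2)}, X_{σ(3)}], X_{σ(4)}, X_{σ(5)}] = 0 on basis vectors X_j = e_{i_j}. -/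
/-- The structure constant `c_n(i_1,…,i_n) = (p q⁻¹)^{⌊(n−1)/2⌋·(i_1+⋯+i_n)} · det M`,
where `M_{r,j} = p^{(r − 2⌊(n−1)/2⌋)·i_j} q^{r·i_j}` for `r = 0,…,n−1`, `j = 1,…,n`. -/
noncomputable def vwC {K : Type*} [Field K] (p q : K) (n : ℕ) (i : Fin n → ℤ) : K :=
  (p * q⁻¹) ^ (((((n - 1) / 2 : ℕ) : ℤ)) * ∑ j, i j) *
    Matrix.det (Matrix.of fun r j : Fin n =>
      p ^ (((r : ℤ) - 2 * (((n - 1) / 2 : ℕ) : ℤ)) * i j) * q ^ ((r : ℤ) * i j))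

private lemma vw_term_eq {K : Type*} [Field K] (p q : K) (hp : p ≠ 0) (hq : q ≠ 0)
    (S X Y Z : ℤ) (hS : S = X + Y + Z) :
    (p * q⁻¹) ^ S * ((p ^ (2 * X))⁻¹ * ((p ^ Y)⁻¹ * q ^ Y) * q ^ (2 * Z)) =
      (p * q) ^ (Z - X) := by
  subst hS
  have h1 : (p * q⁻¹) ^ (X + Y + Z) * ((p ^ (2 * X))⁻¹ * ((p ^ Y)⁻¹ * q ^ Y) * q ^ (2 * Z))
      = (p ^ (X + Y + Z) * (p ^ (-(2 * X)) * p ^ (-Y))) *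
        (q ^ (-(X + Y + Z)) * (q ^ Y * q ^ (2 * Z))) := by
    simp only [mul_zpow, inv_zpow, ← zpow_neg]; ring
  rw [h1, ← zpow_add₀ hp, ← zpow_add₀ hp, ← zpow_add₀ hq, ← zpow_add₀ hq,
    show X + Y + Z + (-(2 * X) + -Y) = Z - X from by ring,
    show -(X + Y + Z) + (Y + 2 * Z) = Z - X from by ring, ← mul_zpow]

private lemma vwC_three {K : Type*} [Field K] (p q : K) (hp : p ≠ 0) (hq : q ≠ 0)
    (a b c : ℤ) :
    vwC p q 3 ![a, b, c] =
      (p * q) ^ (c - a) - (p * q) ^ (b - a) - (p * q) ^ (c - b) + (p * q) ^ (a - b) +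
        (p * q) ^ (b - c) - (p * q) ^ (a - c) := by
  unfold vwC
  rw [Matrix.det_fin_three]
  simp only [Matrix.of_apply, Fin.sum_univ_three, Matrix.cons_val_zero, Matrix.cons_val_one,
    Matrix.head_cons, Matrix.cons_val_two, Matrix.tail_cons]
  norm_num
  rw [mul_sub, mul_add, mul_add, mul_sub, mul_sub,
    vw_term_eq p q hp hq _ a b c (by ring), vw_term_eq p q hp hq _ a c b (by ring),
    vw_term_eq p q hp hq _ b a c (by ring), vw_term_eq p q hp hq _ b c a (by ring),
    vw_term_eq p q hp hq _ c a b (by ring), vw_term_eq p q hp hq _ c b a (by ring)]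

private lemma vw_H {K : Type*} [Field K] (A B C D E : K) (hA : A ≠ 0) (hB : B ≠ 0)
    (hC : C ≠ 0) (hD : D ≠ 0) (hE : E ≠ 0) :
    (C / A - B / A - C / B + A / B + B / C - A / C) *
      (E / (A * B * C) - D / (A * B * C) - E / D + A * B * C / D + D / E - A * B * C / E) =
    ((A * B * C * D * E) ^ 2)⁻¹ *
      (D * E * (B - A) * (C - A) * (C - B) * (D - A * B * C) * (E - A * B * C) * (E - D)) := by
  have e1 : C / A - B / A - C / B + A / B + B / C - A / C =
      ((B - A) * (C - A) * (C - B)) / (A * B * C) := by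
    rw [div_sub_div_same, div_sub_div _ _ hA hB, div_add_div _ _ (mul_ne_zero hA hB) hB,
      div_add_div _ _ (mul_ne_zero (mul_ne_zero hA hB) hB) hC,
      div_sub_div _ _ (mul_ne_zero (mul_ne_zero (mul_ne_zero hA hB) hB) hC) hC,
      div_eq_div_iff (by apply_rules [mul_ne_zero, pow_ne_zero]) (by apply_rules [mul_ne_zero, pow_ne_zero])]
    ring
  have e2 : E / (A * B * C) - D / (A * B * C) - E / D + A * B * C / D + D / E - A * B * C / E =
      ((D - A * B * C) * (E - A * B * C) * (E - D)) / (A * B * C * D * E) := by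
    have hABC : A * B * C ≠ 0 := by apply_rules [mul_ne_zero, pow_ne_zero]
    rw [div_sub_div_same, div_sub_div _ _ hABC hD, div_add_div _ _ (mul_ne_zero hABC hD) hD,
      div_add_div _ _ (mul_ne_zero (mul_ne_zero hABC hD) hD) hE,
      div_sub_div _ _ (mul_ne_zero (mul_ne_zero (mul_ne_zero hABC hD) hD) hE) hE,
      div_eq_div_iff (by apply_rules [mul_ne_zero, pow_ne_zero]) (by apply_rules [mul_ne_zero, pow_ne_zero])]
    ring
  rw [e1, e2, div_mul_div_comm, inv_mul_eq_div, div_eq_div_iff (by apply_rules [mul_ne_zero, pow_ne_zero]) (by apply_rules [mul_ne_zero, pow_ne_zero])]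
  ring

set_option maxHeartbeats 4000000 in
private lemma vw_key {K : Type*} [Field K] (x : Fin 5 → K) :
    ∑ σ : Equiv.Perm (Fin 5), (((Equiv.Perm.sign σ : ℤˣ) : ℤ) : K) *
        (x (σ 3) * x (σ 4) * (x (σ 1) - x (σ 0)) * (x (σ 2) - x (σ 0)) * (x (σ 2) - x (σ 1)) *
          (x (σ 3) - x (σ 0) * x (σ 1) * x (σ 2)) * (x (σ 4) - x (σ 0) * x (σ 1) * x (σ 2)) *
          (x (σ 4) - x (σ 3))) = 0 := by
  have h2 : ∀ n, (2 : Fin (n + 3)) = Fin.succ 1 := fun n => rfl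
  have h3 : ∀ n, (3 : Fin (n + 4)) = Fin.succ 2 := fun n => rfl
  have h4 : ∀ n, (4 : Fin (n + 5)) = Fin.succ 3 := fun n => rfl
  simp only [Finset.univ_perm_fin_succ, Finset.sum_map, Function.Embedding.coeFn_mk,
    Equiv.coe_toEmbedding, Fintype.sum_prod_type, Equiv.Perm.decomposeFin.symm_sign,
    Fin.sum_univ_succ, Finset.univ_unique, Finset.sum_singleton, Finset.univ_eq_empty,
    Finset.sum_empty, h2, h3, h4,
    Equiv.Perm.decomposeFin_symm_apply_zero, Equiv.Perm.decomposeFin_symm_apply_one,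
    Equiv.Perm.decomposeFin_symm_apply_succ]
  norm_num [Equiv.swap_apply_def, Fin.ext_iff]
  ring

/-- For `n = 3` the structure constants `c₃` satisfy the sh-Jacobi
identity: for all integers `i₁,…,i₅`, the signed sum over all permutations `σ` of
`{1,…,5}` of `c₃(i_{σ(1)},i_{σ(2)},i_{σ(3)}) · c₃(i_{σ(1)}+i_{σ(2)}+i_{σ(3)}, i_{σ(4)}, i_{σ(5)})`
vanishes. -/
theorem pq_three_bracket_sh_jacobi
    {K : Type*} [Field K] (p q : K) (hp : p ≠ 0) (hq : q ≠ 0)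
    (i : Fin 5 → ℤ) :
    ∑ σ : Equiv.Perm (Fin 5),
      ((((Equiv.Perm.sign σ : ℤˣ) : ℤ) : K) *
        vwC p q 3 ![i (σ 0), i (σ 1), i (σ 2)] *
        vwC p q 3 ![i (σ 0) + i (σ 1) + i (σ 2), i (σ 3), i (σ 4)]) = 0 := by
  have hpq : p * q ≠ 0 := mul_ne_zero hp hq
  have hu : ∀ z : ℤ, (p * q) ^ z ≠ 0 := fun z => zpow_ne_zero z hpq
  have step : ∀ σ : Equiv.Perm (Fin 5),
      (((Equiv.Perm.sign σ : ℤˣ) : ℤ) : K) *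
        vwC p q 3 ![i (σ 0), i (σ 1), i (σ 2)] *
        vwC p q 3 ![i (σ 0) + i (σ 1) + i (σ 2), i (σ 3), i (σ 4)] =
      ((∏ j, (p * q) ^ (i j)) ^ 2)⁻¹ *
        ((((Equiv.Perm.sign σ : ℤˣ) : ℤ) : K) *
          ((p*q)^(i (σ 3)) * (p*q)^(i (σ 4)) * ((p*q)^(i (σ 1)) - (p*q)^(i (σ 0))) *
            ((p*q)^(i (σ 2)) - (p*q)^(i (σ 0))) * ((p*q)^(i (σ 2)) - (p*q)^(i (σ 1))) *
            ((p*q)^(i (σ 3)) - (p*q)^(i (σ 0)) * (p*q)^(i (σ 1)) * (p*q)^(i (σ 2))) *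
            ((p*q)^(i (σ 4)) - (p*q)^(i (σ 0)) * (p*q)^(i (σ 1)) * (p*q)^(i (σ 2))) *
            ((p*q)^(i (σ 4)) - (p*q)^(i (σ 3))))) := by
    intro σ
    rw [vwC_three p q hp hq, vwC_three p q hp hq, mul_assoc]
    simp only [zpow_sub₀ hpq, zpow_add₀ hpq]
    rw [vw_H _ _ _ _ _ (hu _) (hu _) (hu _) (hu _) (hu _)]
    rw [show (∏ j, (p * q) ^ (i j)) = (p*q)^(i (σ 0)) * (p*q)^(i (σ 1)) * (p*q)^(i (σ 2)) *
          (p*q)^(i (σ 3)) * (p*q)^(i (σ 4)) from by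
        rw [← Equiv.prod_comp σ (fun j => (p * q) ^ (i j)), Fin.prod_univ_five]]
    ring
  rw [Finset.sum_congr rfl fun σ _ => step σ, ← Finset.mul_sum]
  have key := vw_key (K := K) (fun j => (p * q) ^ (i j))
  rw [key, mul_zero]
end

section
/- For n = 3 the (p,q)-deformed Virasoro–Witt 3-bracket fails the Filippov fundamental identity over K = ℚ(p,q): there exist integers y₁, y₂, x₁, x₂, x₃ such that c₃(y₁,y₂, x₁+x₂+x₃)·c₃(x₁,x₂,x₃) ≠ c₃(y₁,y₂,x₁)·c₃(y₁+y₂+x₁, x₂, x₃) + c₃(y₁,y₂,x₂)·c₃(x₁, y₁+y₂+x₂, x₃) + c₃(y₁,y₂,x₃)·c₃(x₁, x₂, y₁+y₂+x₃) in K. -/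
/-- The field `K = ℚ(p,q)` of rational functions in two variables over `ℚ`. -/
abbrev Kpq : Type := FractionRing (MvPolynomial (Fin 2) ℚ)

/-- The image of the first variable `p` in `ℚ(p,q)`. -/
noncomputable def pVar : Kpq :=
  algebraMap (MvPolynomial (Fin 2) ℚ) Kpq (MvPolynomial.X 0)

/-- The image of the second variable `q` in `ℚ(p,q)`. -/
noncomputable def qVar : Kpq :=
  algebraMap (MvPolynomial (Fin 2) ℚ) Kpq (MvPolynomial.X 1)


/-! The matrix defining `c_n(i)` is the transposed Vandermonde matrix of the values `(pq)^{i_j}`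
with its columns rescaled by powers of `p`, so `c_n(i)` vanishes exactly when two of these values
coincide. Since `pq` is transcendental over `ℚ`, this happens exactly
when two of the `i_j` coincide. For `y = (-1, 0)` and `x = (0, 1, 2)` every summand on the right of
the fundamental identity has a factor with a repeated argument, while both factors on the left,
`c₃(-1, 0, 3)` and `c₃(0, 1, 2)`, have distinct arguments. -/

open Matrix Function

section Bracket

variable {K : Type*} [Field K] {p q : K} {n : ℕ}

theorem vwC_eq_zero_of_apply_eq (i : Fin n → ℤ) {j₁ j₂ : Fin n} (hj : j₁ ≠ j₂)
    (h : i j₁ = i j₂) : vwC p q n i = 0 := by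
  rw [vwC, det_zero_of_column_eq hj (fun r => by simp only [of_apply, h]), mul_zero]

theorem vwC_matrix_eq_vandermonde_mul_diagonal (hp : p ≠ 0) (i : Fin n → ℤ) :
    (of fun r j : Fin n =>
      p ^ (((r : ℤ) - 2 * (((n - 1) / 2 : ℕ) : ℤ)) * i j) * q ^ ((r : ℤ) * i j)) =
      (vandermonde fun j => (p * q) ^ i j)ᵀ *
        diagonal fun j => p ^ (-(2 * (((n - 1) / 2 : ℕ) : ℤ)) * i j) := by
  ext r j
  rw [mul_diagonal, transpose_apply, vandermonde_apply, of_apply, ← zpow_natCast,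
    ← _root_.zpow_mul, mul_zpow, mul_right_comm, ← zpow_add₀ hp]
  ring_nf

theorem vwC_ne_zero (hp : p ≠ 0) (hq : q ≠ 0) {i : Fin n → ℤ}
    (hi : Injective fun j => (p * q) ^ i j) : vwC p q n i ≠ 0 := by
  rw [vwC, vwC_matrix_eq_vandermonde_mul_diagonal hp, det_mul, det_transpose, det_diagonal]
  exact mul_ne_zero (zpow_ne_zero _ (mul_ne_zero hp (inv_ne_zero hq)))
    (mul_ne_zero (det_vandermonde_ne_zero_iff.mpr hi)
      (Finset.prod_ne_zero_iff.mpr fun j _ => zpow_ne_zero _ hp))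

end Bracket

theorem Transcendental.zpow_injective {R K : Type*} [CommRing R] [Nontrivial R] [Field K]
    [Algebra R K] {u : K} (hu : Transcendental R u) : Injective fun k : ℤ => u ^ k := by
  have hu₀ : u ≠ 0 := fun h => hu (h ▸ isAlgebraic_zero)
  have hfin : ¬IsOfFinOrder (Units.mk0 u hu₀) := by
    rw [isOfFinOrder_iff_pow_eq_one]
    rintro ⟨k, hk, hu₁⟩
    have hu₁ : u ^ k = 1 := by simpa using congrArg Units.val hu₁
    exact hu.pow hk (hu₁ ▸ isAlgebraic_one)
  intro a b hab
  refine injective_zpow_iff_not_isOfFinOrder.mpr hfin (Units.val_injective ?_)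
  simpa only [Units.val_zpow_eq_zpow_val, Units.val_mk0] using hab

theorem transcendental_pVar_mul_qVar : Transcendental ℚ (pVar * qVar) := by
  have hX : Transcendental ℚ (MvPolynomial.X 0 * MvPolynomial.X 1 : MvPolynomial (Fin 2) ℚ) := by
    intro h
    have h' := h.algHom (MvPolynomial.aeval ![(Polynomial.X : Polynomial ℚ), 1])
    simp only [map_mul, MvPolynomial.aeval_X, cons_val_zero, cons_val_one, cons_val_fin_one,
      mul_one] at h'
    exact Polynomial.transcendental_X ℚ h'
  rw [pVar, qVar, ← map_mul]
  exact (transcendental_algebraMap_iff (IsFractionRing.injective _ _)).mpr hX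

/-- For `n = 3` the `(p,q)`-deformed Virasoro–Witt 3-bracket fails
the Filippov fundamental identity over `K = ℚ(p,q)`: there exist integers
`y₁, y₂, x₁, x₂, x₃` such that
`c₃(y₁,y₂,x₁+x₂+x₃)·c₃(x₁,x₂,x₃) ≠ c₃(y₁,y₂,x₁)·c₃(y₁+y₂+x₁,x₂,x₃)
+ c₃(y₁,y₂,x₂)·c₃(x₁,y₁+y₂+x₂,x₃) + c₃(y₁,y₂,x₃)·c₃(x₁,x₂,y₁+y₂+x₃)`. -/
theorem pq_three_bracket_not_filippov :
    ∃ y₁ y₂ x₁ x₂ x₃ : ℤ,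
      vwC pVar qVar 3 ![y₁, y₂, x₁ + x₂ + x₃] * vwC pVar qVar 3 ![x₁, x₂, x₃] ≠
        vwC pVar qVar 3 ![y₁, y₂, x₁] * vwC pVar qVar 3 ![y₁ + y₂ + x₁, x₂, x₃] +
        vwC pVar qVar 3 ![y₁, y₂, x₂] * vwC pVar qVar 3 ![x₁, y₁ + y₂ + x₂, x₃] +
        vwC pVar qVar 3 ![y₁, y₂, x₃] * vwC pVar qVar 3 ![x₁, x₂, y₁ + y₂ + x₃] := by
  refine ⟨-1, 0, 0, 1, 2, ?_⟩
  have hu := transcendental_pVar_mul_qVar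
  have hpq : pVar * qVar ≠ 0 := fun h => hu (h ▸ isAlgebraic_zero)
  have hp : pVar ≠ 0 := left_ne_zero_of_mul hpq
  have hq : qVar ≠ 0 := right_ne_zero_of_mul hpq
  rw [vwC_eq_zero_of_apply_eq ![-1, 0, 0] (j₁ := 1) (j₂ := 2) (by decide) rfl,
    vwC_eq_zero_of_apply_eq ![0, -1 + 0 + 1, 2] (j₁ := 0) (j₂ := 1) (by decide) (by decide),
    vwC_eq_zero_of_apply_eq ![0, 1, -1 + 0 + 2] (j₁ := 1) (j₂ := 2) (by decide) (by decide),
    zero_mul, mul_zero, mul_zero, add_zero, add_zero]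
  exact mul_ne_zero (vwC_ne_zero hp hq (hu.zpow_injective.comp (by decide)))
    (vwC_ne_zero hp hq (hu.zpow_injective.comp (by decide)))
end

section
/- (Theorem 5.) For every n ≥ 3, the (p,q)-deformed Virasoro–Witt n-bracket is a sh-n-Lie algebra; in terms of structure constants, for all integers i₁, …, i_{2n−1}: Σ_{σ ∈ S_{2n−1}} sign(σ) · c_n(i_{σ(1)}, …, i_{σ(n)}) · c_n(i_{σ(1)}+⋯+i_{σ(n)}, i_{σ(n+1)}, …, i_{σ(2n−1)}) = 0 in K. -/
section VWaux
variable {K : Type*} [Field K]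

/-- `p^a * q^b` with integer exponents. -/
noncomputable def vwP (p q : K) (a b : ℤ) : K := p ^ a * q ^ b

lemma vwP_mul {p q : K} (hp : p ≠ 0) (hq : q ≠ 0) (a b c d : ℤ) :
    vwP p q a b * vwP p q c d = vwP p q (a + c) (b + d) := by
  simp only [vwP, zpow_add₀ hp, zpow_add₀ hq]; ring

lemma vwP_prod {p q : K} (hp : p ≠ 0) (hq : q ≠ 0) {ι : Type*} (s : Finset ι)
    (a b : ι → ℤ) :
    ∏ j ∈ s, vwP p q (a j) (b j) = vwP p q (∑ j ∈ s, a j) (∑ j ∈ s, b j) := by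
  classical
  induction s using Finset.cons_induction with
  | empty => simp [vwP]
  | cons x s hx ih =>
      rw [Finset.prod_cons, ih, vwP_mul hp hq, Finset.sum_cons, Finset.sum_cons]

lemma vwC_eq {p q : K} (hp : p ≠ 0) (hq : q ≠ 0) (n : ℕ) (i : Fin n → ℤ) :
    vwC p q n i = ∑ α : Equiv.Perm (Fin n),
      ((((Equiv.Perm.sign α : ℤˣ) : ℤ) : K) *
        vwP p q
          ((((n - 1) / 2 : ℕ) : ℤ) * (∑ j, i j)
            + ∑ j, (((α j : ℤ)) - 2 * (((n - 1) / 2 : ℕ) : ℤ)) * i j)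
          (-((((n - 1) / 2 : ℕ) : ℤ)) * (∑ j, i j)
            + ∑ j, ((α j : ℤ)) * i j)) := by
  unfold vwC
  rw [Matrix.det_apply, Finset.mul_sum]
  refine Finset.sum_congr rfl fun α _ => ?_
  rw [Units.smul_def, zsmul_eq_mul]
  have hprod : (∏ j, (Matrix.of fun r j : Fin n =>
        p ^ (((r : ℤ) - 2 * (((n - 1) / 2 : ℕ) : ℤ)) * i j) * q ^ ((r : ℤ) * i j)) (α j) j)
      = vwP p q (∑ j, (((α j : ℤ)) - 2 * (((n - 1) / 2 : ℕ) : ℤ)) * i j)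
          (∑ j, ((α j : ℤ)) * i j) := by
    rw [← vwP_prod hp hq]; rfl
  have hpre : (p * q⁻¹) ^ ((((n - 1) / 2 : ℕ) : ℤ) * ∑ j, i j)
      = vwP p q ((((n - 1) / 2 : ℕ) : ℤ) * ∑ j, i j)
          (-((((n - 1) / 2 : ℕ) : ℤ)) * ∑ j, i j) := by
    rw [vwP, mul_zpow, inv_zpow, ← zpow_neg]
    ring_nf
  rw [hprod, hpre, show ∀ x y z : K, x * (y * z) = y * (x * z) from fun x y z => by ring,
    vwP_mul hp hq]

lemma sum_upd1 {ι : Type*} [Fintype ι] [DecidableEq ι] (c v v' : ι → ℤ) (j0 : ι)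
    (h : ∀ j, j ≠ j0 → v' j = v j) :
    ∑ j, c j * v' j = (∑ j, c j * v j) + c j0 * (v' j0 - v j0) := by
  have key : ∑ j, (c j * v' j - c j * v j) = c j0 * (v' j0 - v j0) := by
    rw [Finset.sum_eq_single j0]
    · ring
    · intro b _ hb; rw [h b hb]; ring
    · simp
  calc ∑ j, c j * v' j = (∑ j, c j * v j) + ((∑ j, c j * v' j) - ∑ j, c j * v j) := by ring
    _ = _ := by rw [← Finset.sum_sub_distrib, key]

lemma sum_upd2 {ι : Type*} [Fintype ι] [DecidableEq ι] (c v v' : ι → ℤ) (s t : ι)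
    (hst : s ≠ t) (h : ∀ j, j ≠ s → j ≠ t → v' j = v j) :
    ∑ j, c j * v' j = (∑ j, c j * v j) + c s * (v' s - v s) + c t * (v' t - v t) := by
  have key : ∑ j, (c j * v' j - c j * v j)
      = c s * (v' s - v s) + c t * (v' t - v t) := by
    have h1 : ∑ j, (c j * v' j - c j * v j) = ∑ j ∈ ({s, t} : Finset ι), (c j * v' j - c j * v j) := by
      symm
      apply Finset.sum_subset (Finset.subset_univ _)
      intro x _ hx
      simp only [Finset.mem_insert, Finset.mem_singleton, not_or] at hx
      rw [h x hx.1 hx.2]; ring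
    rw [h1, Finset.sum_pair hst]; ring
  calc ∑ j, c j * v' j = (∑ j, c j * v j) + ((∑ j, c j * v' j) - ∑ j, c j * v j) := by ring
    _ = _ := by rw [← Finset.sum_sub_distrib, key]; ring

def vwF (n : ℕ) (i : Fin (2*n-1) → ℤ) (σ : Equiv.Perm (Fin (2*n-1))) (j : Fin n) : ℤ :=
  i (σ (Fin.castLE (by omega) j))

def vwG (n : ℕ) (i : Fin (2*n-1) → ℤ) (σ : Equiv.Perm (Fin (2*n-1))) (t : Fin n) : ℤ :=
  if (t : ℕ) = 0 then ∑ j, vwF n i σ j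
  else i (σ ⟨n + (t : ℕ) - 1, by have := t.isLt; omega⟩)

def vwE1 (m n : ℕ) (i : Fin (2*n-1) → ℤ) (α β : Equiv.Perm (Fin n))
    (σ : Equiv.Perm (Fin (2*n-1))) : ℤ :=
  ((m : ℤ) * (∑ j, vwF n i σ j) + ∑ j, (((α j : ℤ)) - 2 * (m : ℤ)) * vwF n i σ j)
  + ((m : ℤ) * (∑ t, vwG n i σ t) + ∑ t, (((β t : ℤ)) - 2 * (m : ℤ)) * vwG n i σ t)

def vwE2 (m n : ℕ) (i : Fin (2*n-1) → ℤ) (α β : Equiv.Perm (Fin n))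
    (σ : Equiv.Perm (Fin (2*n-1))) : ℤ :=
  (-(m : ℤ) * (∑ j, vwF n i σ j) + ∑ j, ((α j : ℤ)) * vwF n i σ j)
  + (-(m : ℤ) * (∑ t, vwG n i σ t) + ∑ t, ((β t : ℤ)) * vwG n i σ t)

set_option maxHeartbeats 1000000 in
lemma inner_vanish {p q : K} (hp : p ≠ 0) (hq : q ≠ 0) {m n : ℕ}
    (hm1 : 1 ≤ m) (hm2 : m + 2 ≤ n) (i : Fin (2*n-1) → ℤ)
    (α β : Equiv.Perm (Fin n)) :
    ∑ σ : Equiv.Perm (Fin (2*n-1)),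
      ((((Equiv.Perm.sign σ : ℤˣ) : ℤ) : K) *
        vwP p q (vwE1 m n i α β σ) (vwE2 m n i α β σ)) = 0 := by
  classical
  have hn : 3 ≤ n := by omega
  set z : Fin n := ⟨0, by omega⟩ with hz
  obtain ⟨av, bv, hbvz, heq⟩ :
      ∃ av bv : Fin n, (bv : ℕ) ≠ ((β z) : ℕ) ∧
        ((av : ℤ) + ((β z) : ℤ) = (bv : ℤ) + (m : ℤ)) := by
    by_cases hbm : m ≤ ((β z) : ℕ)
    · exact ⟨⟨0, by omega⟩, ⟨((β z) : ℕ) - m, by have := (β z).isLt; omega⟩,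
        by simp; omega, by simp; omega⟩
    · exact ⟨⟨n - 1, by omega⟩, ⟨((β z) : ℕ) + n - 1 - m, by have := (β z).isLt; omega⟩,
        by simp; omega, by simp; omega⟩
  set j0 : Fin n := α.symm av with hj0def
  set t0 : Fin n := β.symm bv with ht0def
  have hαj0 : α j0 = av := Equiv.apply_symm_apply α av
  have hβt0 : β t0 = bv := Equiv.apply_symm_apply β bv
  have ht0z : (t0 : ℕ) ≠ 0 := by
    intro h
    have h1 : t0 = z := Fin.ext (by simp [hz, h])
    apply hbvz
    rw [← hβt0, h1]
  have npos : n ≤ 2*n-1 := by omega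
  set pos1 : Fin (2*n-1) := Fin.castLE npos j0 with hpos1
  set pos2 : Fin (2*n-1) := ⟨n + (t0 : ℕ) - 1, by have := t0.isLt; omega⟩ with hpos2
  have hpos1v : (pos1 : ℕ) = (j0 : ℕ) := rfl
  have hpos2v : (pos2 : ℕ) = n + (t0 : ℕ) - 1 := rfl
  have hpne : pos1 ≠ pos2 := by
    intro h
    have hv := congrArg Fin.val h
    rw [hpos1v, hpos2v] at hv
    have hj := j0.isLt
    omega
  have hswap1 : Equiv.swap pos1 pos2 pos1 = pos2 := Equiv.swap_apply_left _ _
  have hswap2 : Equiv.swap pos1 pos2 pos2 = pos1 := Equiv.swap_apply_right _ _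
  have hswap3 : ∀ x, x ≠ pos1 → x ≠ pos2 → Equiv.swap pos1 pos2 x = x :=
    fun x h1 h2 => Equiv.swap_apply_of_ne_of_ne h1 h2
  refine Finset.sum_involution (fun σ _ => σ * Equiv.swap pos1 pos2) ?_ ?_
    (fun σ _ => Finset.mem_univ _) ?_
  · -- cancellation
    intro σ _

    have hf : ∀ j : Fin n, vwF n i (σ * Equiv.swap pos1 pos2) j
        = if j = j0 then i (σ pos2) else vwF n i σ j := by
      intro j
      by_cases hj : j = j0
      · subst hj
        rw [if_pos rfl]
        show i (σ (Equiv.swap pos1 pos2 (Fin.castLE npos j0))) = i (σ pos2)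
        rw [show Fin.castLE npos j0 = pos1 from rfl, hswap1]
      · rw [if_neg hj]
        show i (σ (Equiv.swap pos1 pos2 (Fin.castLE npos j))) = i (σ (Fin.castLE npos j))
        rw [hswap3 (Fin.castLE npos j) ?h1 ?h2]
        case h1 =>
          intro h
          apply hj
          have hv := congrArg Fin.val h
          rw [hpos1v] at hv
          exact Fin.ext hv
        case h2 =>
          intro h
          have hv := congrArg Fin.val h
          rw [hpos2v] at hv
          have hjlt := j.isLt
          simp only [Fin.coe_castLE] at hv
          omega
    have hS : (∑ j, vwF n i (σ * Equiv.swap pos1 pos2) j)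
        = (∑ j, vwF n i σ j) + (i (σ pos2) - i (σ pos1)) := by
      have h2 := sum_upd1 (fun _ => (1:ℤ)) (vwF n i σ)
        (vwF n i (σ * Equiv.swap pos1 pos2)) j0
        (fun j hj => by rw [hf j, if_neg hj])
      simp only [one_mul] at h2
      rw [h2, hf j0, if_pos rfl]
      rw [show vwF n i σ j0 = i (σ pos1) from rfl]
    have hg : ∀ t : Fin n, vwG n i (σ * Equiv.swap pos1 pos2) t
        = if (t : ℕ) = 0 then (∑ j, vwF n i σ j) + (i (σ pos2) - i (σ pos1))
          else if t = t0 then i (σ pos1) else vwG n i σ t := by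
      intro t
      by_cases ht : (t : ℕ) = 0
      · rw [if_pos ht, vwG, if_pos ht, hS]
      · rw [if_neg ht, vwG, if_neg ht]
        by_cases ht0 : t = t0
        · rw [if_pos ht0]
          show i (σ (Equiv.swap pos1 pos2 ⟨n + (t : ℕ) - 1, by have := t.isLt; omega⟩))
            = i (σ pos1)
          have hx : (⟨n + (t : ℕ) - 1, by have := t.isLt; omega⟩ : Fin (2*n-1)) = pos2 :=
            Fin.ext (by simp [hpos2v, ht0])
          rw [hx, hswap2]
        · rw [if_neg ht0, vwG, if_neg ht]
          show i (σ (Equiv.swap pos1 pos2 ⟨n + (t : ℕ) - 1, _⟩)) = _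
          rw [hswap3 _ ?g1 ?g2]
          case g1 =>
            intro h
            have hv := congrArg Fin.val h
            rw [hpos1v] at hv
            have hjlt := j0.isLt
            simp only at hv
            omega
          case g2 =>
            intro h
            apply ht0
            have hv := congrArg Fin.val h
            rw [hpos2v] at hv
            simp only at hv
            have h1 := t.isLt
            have h2 := t0.isLt
            exact Fin.ext (by omega)
    have hzz : z ≠ t0 := fun h => ht0z (by rw [← h])
    have hgoff : ∀ t : Fin n, t ≠ z → t ≠ t0 →
        vwG n i (σ * Equiv.swap pos1 pos2) t = vwG n i σ t := by
      intro t htz htt0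
      rw [hg t, if_neg, if_neg htt0]
      intro h
      exact htz (Fin.ext (by simp [hz, h]))
    have hvz : vwG n i σ z = ∑ j, vwF n i σ j := if_pos rfl
    have hgz : vwG n i (σ * Equiv.swap pos1 pos2) z
        = vwG n i σ z + (i (σ pos2) - i (σ pos1)) := by
      rw [hg z, if_pos (show ((z : ℕ) = 0) from rfl), hvz]
    have hgt0 : vwG n i (σ * Equiv.swap pos1 pos2) t0 = i (σ pos1) := by
      rw [hg t0, if_neg ht0z, if_pos rfl]
    have hgt0' : vwG n i σ t0 = i (σ pos2) := if_neg ht0z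
    have hA := sum_upd1 (fun j => ((α j : ℤ)) - 2 * (m : ℤ)) (vwF n i σ)
      (vwF n i (σ * Equiv.swap pos1 pos2)) j0 (fun j hj => by rw [hf j, if_neg hj])
    have hA2 := sum_upd1 (fun j => ((α j : ℤ))) (vwF n i σ)
      (vwF n i (σ * Equiv.swap pos1 pos2)) j0 (fun j hj => by rw [hf j, if_neg hj])
    beta_reduce at hA hA2
    rw [hf j0, if_pos rfl, show vwF n i σ j0 = i (σ pos1) from rfl] at hA hA2
    have hT := sum_upd2 (fun _ => (1:ℤ)) (vwG n i σ)
      (vwG n i (σ * Equiv.swap pos1 pos2)) z t0 hzz hgoff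
    have hB := sum_upd2 (fun t => ((β t : ℤ)) - 2 * (m : ℤ)) (vwG n i σ)
      (vwG n i (σ * Equiv.swap pos1 pos2)) z t0 hzz hgoff
    have hB2 := sum_upd2 (fun t => ((β t : ℤ))) (vwG n i σ)
      (vwG n i (σ * Equiv.swap pos1 pos2)) z t0 hzz hgoff
    beta_reduce at hT hB hB2
    rw [hgz, hgt0, hgt0'] at hT hB hB2
    simp only [one_mul] at hT
    have heq' : ((α j0 : ℤ)) + ((β z : ℤ)) = ((β t0 : ℤ)) + (m : ℤ) := by
      rw [hαj0, hβt0]; exact heq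
    have hE1 : vwE1 m n i α β (σ * Equiv.swap pos1 pos2) = vwE1 m n i α β σ := by
      rw [vwE1, vwE1, hS, hA, hT, hB]
      linear_combination (i (σ pos2) - i (σ pos1)) * heq'
    have hE2 : vwE2 m n i α β (σ * Equiv.swap pos1 pos2) = vwE2 m n i α β σ := by
      rw [vwE2, vwE2, hS, hA2, hT, hB2]
      linear_combination (i (σ pos2) - i (σ pos1)) * heq'
    have hsgn : Equiv.Perm.sign (σ * Equiv.swap pos1 pos2) = - Equiv.Perm.sign σ := by
      rw [Equiv.Perm.sign_mul, Equiv.Perm.sign_swap hpne, mul_neg_one]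
    show _ + ((((Equiv.Perm.sign (σ * Equiv.swap pos1 pos2) : ℤˣ) : ℤ) : K) *
        vwP p q (vwE1 m n i α β (σ * Equiv.swap pos1 pos2))
          (vwE2 m n i α β (σ * Equiv.swap pos1 pos2))) = 0
    rw [hE1, hE2, hsgn]
    simp only [Units.val_neg, Int.cast_neg]
    ring
  · intro σ _ _ h
    have h1 := congrArg (fun τ : Equiv.Perm (Fin (2*n-1)) => τ pos1) h
    simp only [Equiv.Perm.mul_apply, hswap1] at h1
    exact hpne (σ.injective h1).symm
  · intro σ _
    show σ * Equiv.swap pos1 pos2 * Equiv.swap pos1 pos2 = σ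
    rw [mul_assoc, Equiv.swap_mul_self, mul_one]

end VWaux

set_option maxHeartbeats 1000000 in
/-- **Theorem 5.** For every `n ≥ 3` the `(p,q)`-deformed Virasoro–Witt
`n`-bracket is a sh-`n`-Lie algebra; in terms of structure constants, for all integers
`i₁,…,i_{2n−1}`:
`Σ_{σ ∈ S_{2n−1}} sign(σ) · c_n(i_{σ(1)},…,i_{σ(n)}) ·
c_n(i_{σ(1)}+⋯+i_{σ(n)}, i_{σ(n+1)},…,i_{σ(2n−1)}) = 0` in `K`. -/
theorem pq_n_bracket_sh_jacobi
    {K : Type*} [Field K] (p q : K) (hp : p ≠ 0) (hq : q ≠ 0)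
    (n : ℕ) (hn : 3 ≤ n) (i : Fin (2 * n - 1) → ℤ) :
    ∑ σ : Equiv.Perm (Fin (2 * n - 1)),
      ((((Equiv.Perm.sign σ : ℤˣ) : ℤ) : K) *
        vwC p q n (fun j : Fin n => i (σ (Fin.castLE (by omega) j))) *
        vwC p q n (fun t : Fin n =>
          if (t : ℕ) = 0 then ∑ j : Fin n, i (σ (Fin.castLE (by omega) j))
          else i (σ ⟨n + (t : ℕ) - 1, by have := t.isLt; omega⟩))) = 0 := by
  classical
  have hm1 : 1 ≤ (n - 1) / 2 := by omega
  have hm2 : (n - 1) / 2 + 2 ≤ n := by omega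
  have expand : ∀ σ : Equiv.Perm (Fin (2 * n - 1)),
      ((((Equiv.Perm.sign σ : ℤˣ) : ℤ) : K) *
        vwC p q n (vwF n i σ) * vwC p q n (vwG n i σ))
      = ∑ α : Equiv.Perm (Fin n), ∑ β : Equiv.Perm (Fin n),
          ((((Equiv.Perm.sign α : ℤˣ) : ℤ) : K) *
            ((((Equiv.Perm.sign β : ℤˣ) : ℤ) : K) *
              ((((Equiv.Perm.sign σ : ℤˣ) : ℤ) : K) *
                vwP p q (vwE1 ((n - 1) / 2) n i α β σ) (vwE2 ((n - 1) / 2) n i α β σ)))) := by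
    intro σ
    rw [vwC_eq hp hq n (vwF n i σ), vwC_eq hp hq n (vwG n i σ), mul_assoc,
      Finset.sum_mul_sum, Finset.mul_sum]
    refine Finset.sum_congr rfl fun α _ => ?_
    rw [Finset.mul_sum]
    refine Finset.sum_congr rfl fun β _ => ?_
    rw [show ∀ a b c d e : K, a * (b * c * (d * e)) = b * (d * (a * (c * e)))
      from fun a b c d e => by ring, vwP_mul hp hq, vwE1, vwE2]
  calc ∑ σ : Equiv.Perm (Fin (2 * n - 1)),
      ((((Equiv.Perm.sign σ : ℤˣ) : ℤ) : K) *
        vwC p q n (fun j : Fin n => i (σ (Fin.castLE (by omega) j))) *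
        vwC p q n (fun t : Fin n =>
          if (t : ℕ) = 0 then ∑ j : Fin n, i (σ (Fin.castLE (by omega) j))
          else i (σ ⟨n + (t : ℕ) - 1, by have := t.isLt; omega⟩)))
      = ∑ σ : Equiv.Perm (Fin (2 * n - 1)), ∑ α : Equiv.Perm (Fin n),
          ∑ β : Equiv.Perm (Fin n),
          ((((Equiv.Perm.sign α : ℤˣ) : ℤ) : K) *
            ((((Equiv.Perm.sign β : ℤˣ) : ℤ) : K) *
              ((((Equiv.Perm.sign σ : ℤˣ) : ℤ) : K) *
                vwP p q (vwE1 ((n - 1) / 2) n i α β σ) (vwE2 ((n - 1) / 2) n i α β σ)))) :=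
      Finset.sum_congr rfl fun σ _ => expand σ
    _ = ∑ α : Equiv.Perm (Fin n), ∑ σ : Equiv.Perm (Fin (2 * n - 1)),
          ∑ β : Equiv.Perm (Fin n), _ := Finset.sum_comm
    _ = ∑ α : Equiv.Perm (Fin n), ∑ β : Equiv.Perm (Fin n),
          ∑ σ : Equiv.Perm (Fin (2 * n - 1)),
          ((((Equiv.Perm.sign α : ℤˣ) : ℤ) : K) *
            ((((Equiv.Perm.sign β : ℤˣ) : ℤ) : K) *
              ((((Equiv.Perm.sign σ : ℤˣ) : ℤ) : K) *
                vwP p q (vwE1 ((n - 1) / 2) n i α β σ) (vwE2 ((n - 1) / 2) n i α β σ)))) :=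
      Finset.sum_congr rfl fun α _ => Finset.sum_comm
    _ = 0 := by
      refine Finset.sum_eq_zero fun α _ => Finset.sum_eq_zero fun β _ => ?_
      rw [← Finset.mul_sum, ← Finset.mul_sum,
        inner_vanish hp hq hm1 hm2 i α β, mul_zero, mul_zero]
end

section
/- For every even n ≥ 4, the (p,q)-deformed Virasoro–Witt n-bracket over K = ℚ(p,q) is not an n-Lie algebra: with Y_i = e_{−i−1} for i = 1,…,n−2, Y_{n−1} = e_{n(n−1)/2}, and X_j = e_{j−1} for j = 1,…,n, the Filippov fundamental identity fails, i.e. [Y_1,…,Y_{n−1},[X_1,…,X_n]] ≠ Σ_{k=1}^n [X_1,…,X_{k−1},[Y_1,…,Y_{n−1},X_k],X_{k+1},…,X_n]. -/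
/-- The `(p,q)`-deformed Virasoro–Witt `n`-bracket: the (alternating) `n`-multilinear
map on the free module `ℤ →₀ K` determined on basis vectors by
`[e_{i_1},…,e_{i_n}] = c_n(i_1,…,i_n) • e_{i_1+⋯+i_n}`. -/
noncomputable def vwBr {K : Type*} [Field K] (p q : K) (n : ℕ)
    (v : Fin n → (ℤ →₀ K)) : ℤ →₀ K :=
  ∑ f ∈ Fintype.piFinset (fun j => (v j).support),
    ((∏ j, v j (f j)) * vwC p q n f) • Finsupp.single (∑ j, f j) (1 : K)

/-! ### Auxiliary lemmas -/


open Finset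

lemma vwBr_single {K : Type*} [Field K] (p q : K) (n : ℕ) (a : Fin n → ℤ) (c : Fin n → K) :
    vwBr p q n (fun j => Finsupp.single (a j) (c j)) =
      ((∏ j, c j) * vwC p q n a) • Finsupp.single (∑ j, a j) (1 : K) := by
  by_cases h : ∀ j, c j ≠ 0
  · unfold vwBr
    have hset : Fintype.piFinset (fun j => (Finsupp.single (a j) (c j)).support) = {a} := by
      ext f
      simp only [Fintype.mem_piFinset, Finset.mem_singleton, funext_iff]
      constructor
      · intro H j
        have := H j
        rw [Finsupp.support_single_ne_zero _ (h j), Finset.mem_singleton] at this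
        exact this
      · intro H j
        rw [Finsupp.support_single_ne_zero _ (h j), Finset.mem_singleton]
        exact H j
    rw [hset, Finset.sum_singleton]
    congr 1
    congr 1
    exact Finset.prod_congr rfl fun j _ => Finsupp.single_eq_same
  · push_neg at h
    obtain ⟨j0, hj0⟩ := h
    have hp0 : (∏ j, c j) = 0 := Finset.prod_eq_zero (Finset.mem_univ j0) hj0
    rw [hp0, zero_mul, zero_smul]
    unfold vwBr
    have hset : Fintype.piFinset (fun j => (Finsupp.single (a j) (c j)).support) = ∅ := by
      ext f
      simp only [Fintype.mem_piFinset, Finset.notMem_empty, iff_false, not_forall]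
      refine ⟨j0, ?_⟩
      rw [hj0, Finsupp.single_zero, Finsupp.support_zero]
      exact Finset.notMem_empty _
    rw [hset, Finset.sum_empty]

lemma vwC_eq_zero {K : Type*} [Field K] (p q : K) {n : ℕ} {a : Fin n → ℤ} {j j' : Fin n}
    (h : j ≠ j') (ha : a j = a j') : vwC p q n a = 0 := by
  unfold vwC
  rw [Matrix.det_zero_of_column_eq h (fun r => by simp [ha]), mul_zero]

lemma vwC_ne_zero_s9 {K : Type*} [Field K] {p q : K} (hp : p ≠ 0) (hq : q ≠ 0)
    (hpq : ∀ d : ℤ, (p * q) ^ d = 1 → d = 0) {n : ℕ} {a : Fin n → ℤ}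
    (ha : Function.Injective a) : vwC p q n a ≠ 0 := by
  have hx : p * q ≠ 0 := mul_ne_zero hp hq
  unfold vwC
  set m : ℤ := (((n - 1) / 2 : ℕ) : ℤ) with hm
  have hdet : (Matrix.of fun r j : Fin n =>
      p ^ (((r : ℤ) - 2 * m) * a j) * q ^ ((r : ℤ) * a j)) =
      Matrix.of fun r j : Fin n => (p ^ (-(2 * m) * a j)) *
        Matrix.transpose (Matrix.vandermonde (fun j => (p * q) ^ (a j))) r j := by
    ext r j
    simp only [Matrix.of_apply, Matrix.transpose_apply, Matrix.vandermonde_apply]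
    rw [← zpow_natCast ((p*q) ^ (a j)) r, ← zpow_mul, mul_zpow]
    rw [sub_mul, zpow_sub₀ hp, div_eq_mul_inv, ← zpow_neg]
    rw [mul_comm (a j) (r:ℤ)]
    ring_nf
  rw [hdet, Matrix.det_mul_row, Matrix.det_transpose, Matrix.det_vandermonde]
  refine mul_ne_zero (zpow_ne_zero _ (mul_ne_zero hp (inv_ne_zero hq))) (mul_ne_zero ?_ ?_)
  · exact Finset.prod_ne_zero_iff.mpr fun j _ => zpow_ne_zero _ hp
  · refine Finset.prod_ne_zero_iff.mpr fun i _ => Finset.prod_ne_zero_iff.mpr fun j hj => ?_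
    rw [sub_ne_zero]
    intro hEq
    have h1 : (p * q) ^ (a j - a i) = 1 := by
      rw [zpow_sub₀ hx, hEq, div_self (zpow_ne_zero _ hx)]
    have h2 := hpq _ h1
    have hij : a j = a i := by omega
    exact absurd (ha hij) (Finset.mem_Ioi.mp hj).ne'

lemma algebraMap_Kpq_inj : Function.Injective (algebraMap (MvPolynomial (Fin 2) ℚ) Kpq) :=
  IsFractionRing.injective _ _

lemma pVar_ne_zero : pVar ≠ 0 := by
  unfold pVar
  rw [Ne, ← (algebraMap (MvPolynomial (Fin 2) ℚ) Kpq).map_zero]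
  exact fun h => MvPolynomial.X_ne_zero 0 (algebraMap_Kpq_inj h)

lemma qVar_ne_zero : qVar ≠ 0 := by
  unfold qVar
  rw [Ne, ← (algebraMap (MvPolynomial (Fin 2) ℚ) Kpq).map_zero]
  exact fun h => MvPolynomial.X_ne_zero 1 (algebraMap_Kpq_inj h)

lemma pq_pow_ne_one : ∀ k : ℕ, 0 < k → (pVar * qVar) ^ k ≠ 1 := by
  intro k hk h
  have heq : (pVar * qVar) ^ k = algebraMap (MvPolynomial (Fin 2) ℚ) Kpq
      ((MvPolynomial.X 0 * MvPolynomial.X 1) ^ k) := by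
    rw [map_pow, map_mul]; rfl
  rw [heq, show (1 : Kpq) = algebraMap (MvPolynomial (Fin 2) ℚ) Kpq 1 from (map_one _).symm] at h
  have h2 := algebraMap_Kpq_inj h
  have h3 := congrArg MvPolynomial.constantCoeff h2
  rw [map_pow, map_mul, MvPolynomial.constantCoeff_X, MvPolynomial.constantCoeff_X,
    map_one, mul_zero, zero_pow hk.ne'] at h3
  exact zero_ne_one h3

lemma pq_zpow_eq_one : ∀ d : ℤ, (pVar * qVar) ^ d = 1 → d = 0 := by
  intro d hd
  by_contra hd0
  rcases lt_trichotomy d 0 with h | h | h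
  · have h1 : (pVar * qVar) ^ (-d) = 1 := by
      rw [zpow_neg, hd, inv_one]
    obtain ⟨k, hk⟩ : ∃ k : ℕ, -d = (k : ℤ) := ⟨(-d).toNat, by omega⟩
    rw [hk, zpow_natCast] at h1
    exact pq_pow_ne_one k (by omega) h1
  · exact hd0 h
  · obtain ⟨k, hk⟩ : ∃ k : ℕ, d = (k : ℤ) := ⟨d.toNat, by omega⟩
    rw [hk, zpow_natCast] at hd
    exact pq_pow_ne_one k (by omega) hd

def yF (n : ℕ) (T k : ℤ) : Fin n → ℤ :=
  fun t => if (t:ℕ) < n - 2 then -((t:ℕ):ℤ) - 2 else if (t:ℕ) < n - 1 then T else k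

def bF (n : ℕ) (k : Fin n) : Fin n → ℤ :=
  fun j => if j = k then 1 + ((k:ℕ):ℤ) else ((j:ℕ):ℤ)

lemma gauss_sum (m : ℕ) : (∑ i ∈ Finset.range m, (i:ℤ)) * 2 = (m:ℤ) * ((m:ℤ) - 1) := by
  induction m with
  | zero => simp
  | succ m ih => rw [Finset.sum_range_succ, add_mul, ih]; push_cast; ring

lemma sum_yF (n : ℕ) (hn : 4 ≤ n) (T k : ℤ) (hT : 2 * T = (n:ℤ) * ((n:ℤ) - 1)) :
    ∑ t : Fin n, yF n T k t = 1 + k := by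
  obtain ⟨m, rfl⟩ : ∃ m, n = m + 2 := ⟨n - 2, by omega⟩
  have h0 : ∀ t : Fin (m+2), yF (m+2) T k t
      = (fun i : ℕ => if i < m then -(i:ℤ) - 2 else if i < m + 1 then T else k) (t:ℕ) := by
    intro t; unfold yF
    simp only [show m + 2 - 2 = m from rfl, show m + 2 - 1 = m + 1 from rfl]
  have h1 : ∑ t : Fin (m+2), yF (m+2) T k t
      = ∑ i ∈ Finset.range (m+2), (if i < m then -(i:ℤ) - 2 else if i < m + 1 then T else k) :=
    (Finset.sum_congr rfl (fun t _ => h0 t)).trans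
      (Fin.sum_univ_eq_sum_range
        (fun i : ℕ => if i < m then -(i:ℤ) - 2 else if i < m + 1 then T else k) (m+2))
  rw [h1, Finset.sum_range_succ, Finset.sum_range_succ]
  rw [if_neg (show ¬ (m < m) by omega), if_pos (show m < m + 1 by omega),
    if_neg (show ¬ (m + 1 < m) by omega), if_neg (show ¬ (m + 1 < m + 1) by omega)]
  have h2 : ∑ i ∈ Finset.range m, (if i < m then -(i:ℤ) - 2 else if i < m + 1 then T else k)
      = ∑ i ∈ Finset.range m, (-(i:ℤ) - 2) :=
    Finset.sum_congr rfl fun i hi => if_pos (Finset.mem_range.mp hi)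
  rw [h2]
  have h3 : ∑ i ∈ Finset.range m, (-(i:ℤ) - 2)
      = -(∑ i ∈ Finset.range m, (i:ℤ)) - 2 * m := by
    rw [Finset.sum_sub_distrib, Finset.sum_neg_distrib, Finset.sum_const, Finset.card_range]
    ring
  have h4 := gauss_sum m
  have hc : ((m:ℤ) + 2) * (((m:ℤ) + 2) - 1) = (m:ℤ) * ((m:ℤ) - 1) + 4 * (m:ℤ) + 2 := by ring
  push_cast at hT
  rw [h3]
  linarith [h4, hT, hc]

lemma sum_bF (n : ℕ) (k : Fin n) :
    ∑ j, bF n k j = (∑ j : Fin n, ((j:ℕ):ℤ)) + 1 := by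
  have h : ∀ j : Fin n, bF n k j = ((j:ℕ):ℤ) + (if j = k then 1 else 0) := by
    intro j; unfold bF
    by_cases hj : j = k
    · subst hj; rw [if_pos rfl, if_pos rfl]; ring
    · rw [if_neg hj, if_neg hj, add_zero]
  rw [Finset.sum_congr rfl (fun j _ => h j), Finset.sum_add_distrib]
  congr 1
  rw [Finset.sum_ite_eq' Finset.univ k (fun _ => (1:ℤ))]
  simp


/-- For every even `n ≥ 4`, the `(p,q)`-deformed Virasoro–Witt
`n`-bracket over `K = ℚ(p,q)` is not an `n`-Lie algebra: with `Y_i = e_{−i−1}`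
(`i = 1,…,n−2`), `Y_{n−1} = e_{n(n−1)/2}` and `X_j = e_{j−1}` (`j = 1,…,n`), the
Filippov fundamental identity
`[Y_1,…,Y_{n−1},[X_1,…,X_n]] = Σ_{k=1}^n [X_1,…,[Y_1,…,Y_{n−1},X_k],…,X_n]` fails. -/
theorem pq_n_bracket_not_n_Lie_even
    (n : ℕ) (hn : 4 ≤ n) (heven : n % 2 = 0) :
    vwBr pVar qVar n (fun t : Fin n =>
        if (t : ℕ) < n - 1 then
          (if (t : ℕ) < n - 2 then Finsupp.single (-((t : ℕ) : ℤ) - 2) (1 : Kpq)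
           else Finsupp.single ((n : ℤ) * ((n : ℤ) - 1) / 2) 1)
        else vwBr pVar qVar n (fun s : Fin n => Finsupp.single (((s : ℕ) : ℤ)) 1)) ≠
      ∑ k : Fin n,
        vwBr pVar qVar n
          (Function.update (fun s : Fin n => Finsupp.single (((s : ℕ) : ℤ)) (1 : Kpq)) k
            (vwBr pVar qVar n (fun t : Fin n =>
              if (t : ℕ) < n - 1 then
                (if (t : ℕ) < n - 2 then Finsupp.single (-((t : ℕ) : ℤ) - 2) (1 : Kpq)
                 else Finsupp.single ((n : ℤ) * ((n : ℤ) - 1) / 2) 1)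
              else Finsupp.single (((k : ℕ) : ℤ)) 1))) := by
  have hp : pVar ≠ 0 := pVar_ne_zero
  have hq : qVar ≠ 0 := qVar_ne_zero
  have hpq := pq_zpow_eq_one
  have hlt : n - 1 < n := by omega
  set T : ℤ := (n:ℤ) * ((n:ℤ) - 1) / 2 with hTdef
  have hT : 2 * T = (n:ℤ) * ((n:ℤ) - 1) := by
    rw [hTdef]
    exact Int.mul_ediv_cancel' (Dvd.dvd.mul_right (by omega : (2:ℤ) ∣ (n:ℤ)) _)
  have hn4 : (4:ℤ) ≤ (n:ℤ) := by exact_mod_cast hn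
  have hTge : (n:ℤ) ≤ T := by nlinarith [hT, hn4]
  have hS : ∑ j : Fin n, ((j:ℕ):ℤ) = T := by
    have h1 : ∑ j : Fin n, ((j:ℕ):ℤ) = ∑ i ∈ Finset.range n, (i:ℤ) :=
      Fin.sum_univ_eq_sum_range (fun i : ℕ => (i:ℤ)) n
    have h2 := gauss_sum n
    rw [h1]; linarith [h2, hT]
  -- LHS is zero
  have hInner : vwBr pVar qVar n (fun s : Fin n => Finsupp.single (((s:ℕ):ℤ)) (1:Kpq))
      = vwC pVar qVar n (fun s : Fin n => ((s:ℕ):ℤ)) • Finsupp.single T (1:Kpq) := by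
    have h : vwBr pVar qVar n (fun s : Fin n => Finsupp.single (((s:ℕ):ℤ)) (1:Kpq))
        = ((∏ _j : Fin n, (1:Kpq)) * vwC pVar qVar n (fun s : Fin n => ((s:ℕ):ℤ))) •
            Finsupp.single (∑ j : Fin n, ((j:ℕ):ℤ)) (1:Kpq) :=
      vwBr_single pVar qVar n (fun s : Fin n => ((s:ℕ):ℤ)) (fun _ => 1)
    rw [h, hS, Finset.prod_const_one, one_mul]
  rw [hInner]
  have hveq : (fun t : Fin n =>
        if (t:ℕ) < n - 1 then
          (if (t:ℕ) < n - 2 then Finsupp.single (-((t:ℕ):ℤ) - 2) (1:Kpq)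
           else Finsupp.single T 1)
        else vwC pVar qVar n (fun s : Fin n => ((s:ℕ):ℤ)) • Finsupp.single T (1:Kpq))
      = fun j : Fin n => Finsupp.single (if (j:ℕ) < n - 2 then -((j:ℕ):ℤ) - 2 else T)
          (if (j:ℕ) < n - 1 then (1:Kpq) else vwC pVar qVar n (fun s : Fin n => ((s:ℕ):ℤ))) := by
    funext j
    by_cases h1 : (j:ℕ) < n - 2
    · rw [if_pos (show (j:ℕ) < n - 1 by omega), if_pos h1, if_pos h1,
        if_pos (show (j:ℕ) < n - 1 by omega)]
    · by_cases h2 : (j:ℕ) < n - 1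
      · rw [if_pos h2, if_neg h1, if_neg h1, if_pos h2]
      · rw [if_neg h2, if_neg h1, if_neg h2, Finsupp.smul_single', mul_one]
  rw [hveq]
  have hL : vwBr pVar qVar n (fun j : Fin n =>
        Finsupp.single (if (j:ℕ) < n - 2 then -((j:ℕ):ℤ) - 2 else T)
          (if (j:ℕ) < n - 1 then (1:Kpq) else vwC pVar qVar n (fun s : Fin n => ((s:ℕ):ℤ))))
      = ((∏ j : Fin n, (if (j:ℕ) < n - 1 then (1:Kpq)
            else vwC pVar qVar n (fun s : Fin n => ((s:ℕ):ℤ)))) *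
          vwC pVar qVar n (fun j : Fin n => if (j:ℕ) < n - 2 then -((j:ℕ):ℤ) - 2 else T)) •
          Finsupp.single (∑ j : Fin n, (if (j:ℕ) < n - 2 then -((j:ℕ):ℤ) - 2 else T)) (1:Kpq) :=
    vwBr_single pVar qVar n _ _
  have hAzero : vwC pVar qVar n (fun j : Fin n => if (j:ℕ) < n - 2 then -((j:ℕ):ℤ) - 2 else T)
      = 0 := by
    have hne : (⟨n-2, by omega⟩ : Fin n) ≠ (⟨n-1, hlt⟩ : Fin n) := fun h => by
      have h2 : n - 2 = n - 1 := congrArg Fin.val h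
      omega
    refine vwC_eq_zero _ _ hne ?_
    show (if n - 2 < n - 2 then -(((n-2:ℕ)):ℤ) - 2 else T)
        = (if n - 1 < n - 2 then -(((n-1:ℕ)):ℤ) - 2 else T)
    rw [if_neg (by omega), if_neg (by omega)]
  rw [hL, hAzero, mul_zero, zero_smul]
  -- RHS terms
  have hterm : ∀ k : Fin n,
      vwBr pVar qVar n
        (Function.update (fun s : Fin n => Finsupp.single (((s:ℕ):ℤ)) (1:Kpq)) k
          (vwBr pVar qVar n (fun t : Fin n =>
            if (t:ℕ) < n - 1 then
              (if (t:ℕ) < n - 2 then Finsupp.single (-((t:ℕ):ℤ) - 2) (1:Kpq)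
               else Finsupp.single T 1)
            else Finsupp.single (((k:ℕ):ℤ)) 1)))
      = (vwC pVar qVar n (yF n T ((k:ℕ):ℤ)) * vwC pVar qVar n (bF n k)) •
          Finsupp.single (T + 1) (1:Kpq) := by
    intro k
    have hy0 : (fun t : Fin n =>
          if (t:ℕ) < n - 1 then
            (if (t:ℕ) < n - 2 then Finsupp.single (-((t:ℕ):ℤ) - 2) (1:Kpq)
             else Finsupp.single T 1)
          else Finsupp.single (((k:ℕ):ℤ)) 1)
        = fun t : Fin n => Finsupp.single (yF n T ((k:ℕ):ℤ) t) (1:Kpq) := by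
      funext t; unfold yF
      by_cases h1 : (t:ℕ) < n - 2
      · rw [if_pos (show (t:ℕ) < n - 1 by omega), if_pos h1, if_pos h1]
      · by_cases h2 : (t:ℕ) < n - 1
        · rw [if_pos h2, if_neg h1, if_neg h1, if_pos h2]
        · rw [if_neg h2, if_neg h1, if_neg h2]
    have hy1 : vwBr pVar qVar n (fun t : Fin n => Finsupp.single (yF n T ((k:ℕ):ℤ) t) (1:Kpq))
        = ((∏ _t : Fin n, (1:Kpq)) * vwC pVar qVar n (yF n T ((k:ℕ):ℤ))) •
            Finsupp.single (∑ t : Fin n, yF n T ((k:ℕ):ℤ) t) (1:Kpq) :=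
      vwBr_single pVar qVar n _ _
    rw [hy0, hy1, Finset.prod_const_one, one_mul, sum_yF n hn T _ hT]
    have hupd : Function.update (fun s : Fin n => Finsupp.single (((s:ℕ):ℤ)) (1:Kpq)) k
          (vwC pVar qVar n (yF n T ((k:ℕ):ℤ)) • Finsupp.single (1 + ((k:ℕ):ℤ)) (1:Kpq))
        = fun j : Fin n => Finsupp.single (bF n k j)
            (if j = k then vwC pVar qVar n (yF n T ((k:ℕ):ℤ)) else 1) := by
      funext j
      rw [Function.update_apply]
      by_cases hj : j = k
      · rw [if_pos hj, if_pos hj, Finsupp.smul_single', mul_one]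
        subst hj
        unfold bF; rw [if_pos rfl]
      · rw [if_neg hj, if_neg hj]
        unfold bF; rw [if_neg hj]
    rw [hupd]
    have hb1 : vwBr pVar qVar n (fun j : Fin n => Finsupp.single (bF n k j)
          (if j = k then vwC pVar qVar n (yF n T ((k:ℕ):ℤ)) else 1))
        = ((∏ j : Fin n, (if j = k then vwC pVar qVar n (yF n T ((k:ℕ):ℤ)) else 1)) *
            vwC pVar qVar n (bF n k)) • Finsupp.single (∑ j : Fin n, bF n k j) (1:Kpq) :=
      vwBr_single pVar qVar n _ _
    have hprod : (∏ j : Fin n, (if j = k then vwC pVar qVar n (yF n T ((k:ℕ):ℤ)) else 1))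
        = vwC pVar qVar n (yF n T ((k:ℕ):ℤ)) := by
      rw [Finset.prod_eq_single_of_mem k (Finset.mem_univ k) (fun j _ hjk => if_neg hjk),
        if_pos rfl]
    rw [hb1, sum_bF n k, hS, hprod]
  simp only [hterm]
  rw [← Finset.sum_smul]
  have hbzero : ∀ k : Fin n, (k:ℕ) < n - 1 → vwC pVar qVar n (bF n k) = 0 := by
    intro k hk
    have hne : k ≠ (⟨(k:ℕ)+1, by omega⟩ : Fin n) := fun h => by
      have h2 : (k:ℕ) = (k:ℕ) + 1 := congrArg Fin.val h
      omega
    refine vwC_eq_zero _ _ hne ?_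
    unfold bF
    rw [if_pos rfl, if_neg (fun h => hne h.symm)]
    show 1 + ((k:ℕ):ℤ) = (((k:ℕ) + 1 : ℕ):ℤ)
    push_cast; ring
  have hsum1 : (∑ k : Fin n,
        vwC pVar qVar n (yF n T ((k:ℕ):ℤ)) * vwC pVar qVar n (bF n k))
      = vwC pVar qVar n (yF n T ((n-1:ℕ):ℤ)) * vwC pVar qVar n (bF n ⟨n-1, hlt⟩) := by
    refine Finset.sum_eq_single_of_mem (⟨n-1, hlt⟩ : Fin n) (Finset.mem_univ _) ?_
    intro k _ hk
    have hkv : (k:ℕ) < n - 1 := by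
      have h1 : (k:ℕ) ≠ n - 1 := fun h => hk (Fin.ext h)
      have := k.isLt
      omega
    rw [hbzero k hkv, mul_zero]
  rw [hsum1]
  have hyinj : Function.Injective (yF n T ((n - 1 : ℕ) : ℤ)) := by
    intro s t h
    have hs := s.isLt; have ht := t.isLt
    unfold yF at h
    apply Fin.ext
    split_ifs at h <;> omega
  have hbinj : Function.Injective (bF n (⟨n-1, hlt⟩ : Fin n)) := by
    intro s t h
    unfold bF at h
    have h1 : ((⟨n-1, hlt⟩ : Fin n):ℕ) = n - 1 := rfl
    by_cases hs' : s = (⟨n-1, hlt⟩ : Fin n) <;> by_cases ht' : t = (⟨n-1, hlt⟩ : Fin n)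
    · rw [hs', ht']
    · rw [if_pos hs', if_neg ht'] at h
      exfalso
      rw [h1] at h
      have := t.isLt
      omega
    · rw [if_neg hs', if_pos ht'] at h
      exfalso
      rw [h1] at h
      have := s.isLt
      omega
    · rw [if_neg hs', if_neg ht'] at h
      exact Fin.ext (by exact_mod_cast h)
  have hcne : vwC pVar qVar n (yF n T ((n-1:ℕ):ℤ)) * vwC pVar qVar n (bF n ⟨n-1, hlt⟩) ≠ 0 :=
    mul_ne_zero (vwC_ne_zero_s9 hp hq hpq hyinj) (vwC_ne_zero_s9 hp hq hpq hbinj)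
  rw [Finsupp.smul_single', mul_one]
  exact fun h => hcne (Finsupp.single_eq_zero.mp h.symm)
end

section
/- Let n = 2k+1 be odd with k ≥ 1 and let S = {−k, −k+1, …, k}. Then the K-linear span A of {e_i : i ∈ S} is closed under the (p,q)-deformed Virasoro–Witt n-bracket; in particular [e_{−k}, e_{−k+1}, …, e_k] = c_n(−k, …, k)·e_0 since (−k) + (−k+1) + ⋯ + k = 0 ∈ S. Moreover, the restricted bracket on A satisfies the Filippov fundamental identity, so A is an n-Lie subalgebra. -/
open Finset Matrix

section Aux
variable {K : Type*} [Field K] (p q : K)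

lemma vwC_eq_zero_of_not_inj {n : ℕ} (f : Fin n → ℤ) (hf : ¬ Function.Injective f) :
    vwC p q n f = 0 := by
  rw [Function.not_injective_iff] at hf
  obtain ⟨a, b, hab, hne⟩ := hf
  unfold vwC
  rw [Matrix.det_zero_of_column_eq hne (fun r => by simp [hab]), mul_zero]

lemma vwC_comp {n : ℕ} (f : Fin n → ℤ) (σ : Equiv.Perm (Fin n)) :
    vwC p q n (f ∘ σ) = ((Equiv.Perm.sign σ : ℤ) : K) * vwC p q n f := by
  unfold vwC
  have hs : (∑ j, (f ∘ σ) j) = ∑ j, f j := Equiv.sum_comp σ f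
  rw [hs]
  have hM : (Matrix.of fun r j : Fin n =>
        p ^ (((r : ℤ) - 2 * (((n - 1) / 2 : ℕ) : ℤ)) * (f ∘ σ) j) * q ^ ((r : ℤ) * (f ∘ σ) j))
      = (Matrix.of fun r j : Fin n =>
        p ^ (((r : ℤ) - 2 * (((n - 1) / 2 : ℕ) : ℤ)) * f j) * q ^ ((r : ℤ) * f j)).submatrix
          id σ := rfl
  rw [hM, Matrix.det_permute']
  push_cast
  ring

lemma cramer_key {n : ℕ} (B : Matrix (Fin n) (Fin n) K) (φ : (Fin n → K) →ₗ[K] K)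
    (w : Fin n → K) :
    φ w * B.det = ∑ m, φ (B m) * (B.updateRow m w).det := by
  have h1 : ∀ m, (B.updateRow m w).det = Bᵀ.cramer w m := by
    intro m
    rw [Matrix.cramer_apply, Matrix.updateCol_transpose, Matrix.det_transpose]
  simp_rw [h1]
  have h2 : ∑ m, φ (B m) * Bᵀ.cramer w m = φ (∑ m, Bᵀ.cramer w m • B m) := by
    rw [map_sum]
    refine Finset.sum_congr rfl fun m _ => ?_
    rw [_root_.map_smul, smul_eq_mul, mul_comm]
  rw [h2]
  have h3 : (∑ m, Bᵀ.cramer w m • B m) = B.det • w := by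
    have h := Matrix.mulVec_cramer Bᵀ w
    funext l
    have hl := congrFun h l
    simp only [Matrix.mulVec, dotProduct, Matrix.transpose_apply,
      Matrix.det_transpose, Pi.smul_apply, smul_eq_mul] at hl
    rw [Finset.sum_apply]
    simp only [Pi.smul_apply, smul_eq_mul]
    rw [← hl]
    exact Finset.sum_congr rfl fun m _ => mul_comm _ _
  rw [h3, _root_.map_smul, smul_eq_mul, mul_comm]

end Aux
def iota (k : ℕ) (j : Fin (2*k+1)) : ℤ := -(k:ℤ) + ((j:ℕ):ℤ)

section Main
variable {K : Type*} [Field K] (p q : K)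

lemma vwBr_eq_det (k : ℕ) (v : Fin (2*k+1) → (ℤ →₀ K))
    (hv : ∀ j, (v j).support ⊆ Finset.Icc (-(k:ℤ)) (k:ℤ)) :
    vwBr p q (2*k+1) v =
      (vwC p q (2*k+1) (iota k) *
        (Matrix.of (fun j l : Fin (2*k+1) => v j (iota k l))).det) •
      Finsupp.single (0:ℤ) (1:K) := by
  set ι : Fin (2*k+1) → ℤ := iota k with hι
  set T : Finset ℤ := Finset.Icc (-(k:ℤ)) (k:ℤ) with hT
  have hιT : ∀ j, ι j ∈ T := by
    intro j
    have := j.isLt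
    simp only [hι, hT, Finset.mem_Icc, iota]
    omega
  have ιinj : Function.Injective ι := by
    intro a b hab
    simp only [hι, iota] at hab
    exact Fin.ext (by omega)
  have sum0 : (∑ j : Fin (2*k+1), ι j) = 0 := by
    simp only [hι, iota]
    rw [Finset.sum_add_distrib, Finset.sum_const, Finset.card_univ, Fintype.card_fin]
    rw [Fin.sum_univ_eq_sum_range (fun i => ((i:ℕ):ℤ))]
    have h2 : (∑ i ∈ Finset.range (2*k+1), i) = (2*k+1)*k := by
      have h1 := Finset.sum_range_id_mul_two (2*k+1)
      have e1 : 2*k+1-1 = 2*k := rfl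
      rw [e1] at h1
      have e2 : (2*k+1)*(2*k) = ((2*k+1)*k)*2 := by ring
      rw [e2] at h1
      exact Nat.eq_of_mul_eq_mul_right (by norm_num) h1
    have h3 : (∑ i ∈ Finset.range (2*k+1), (i:ℤ)) = ((∑ i ∈ Finset.range (2*k+1), i : ℕ) : ℤ) := by
      push_cast; rfl
    rw [h3, h2]
    push_cast
    ring
  set t : (Fin (2*k+1) → ℤ) → (ℤ →₀ K) := fun f =>
    ((∏ j, v j (f j)) * vwC p q (2*k+1) f) • Finsupp.single (∑ j, f j) (1:K) with ht
  have hB : vwBr p q (2*k+1) v = ∑ f ∈ Fintype.piFinset (fun _ : Fin (2*k+1) => T), t f := by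
    rw [vwBr]
    refine Finset.sum_subset (Fintype.piFinset_subset _ _ (fun j => hv j)) ?_
    intro f hfT hfS
    rw [Fintype.mem_piFinset] at hfS
    push_neg at hfS
    obtain ⟨j, hj⟩ := hfS
    rw [Finsupp.notMem_support_iff] at hj
    rw [Finset.prod_eq_zero (Finset.mem_univ j) hj, zero_mul, zero_smul]
  set e : Equiv.Perm (Fin (2*k+1)) → (Fin (2*k+1) → ℤ) := fun σ => ι ∘ σ with he
  have einj : Function.Injective e := by
    intro σ τ h
    exact Equiv.ext fun j => ιinj (congrFun h j)
  have hC : ∑ f ∈ Fintype.piFinset (fun _ : Fin (2*k+1) => T), t f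
      = ∑ f ∈ Finset.univ.image e, t f := by
    refine (Finset.sum_subset ?_ ?_).symm
    · intro f hf
      rw [Finset.mem_image] at hf
      obtain ⟨σ, -, rfl⟩ := hf
      rw [Fintype.mem_piFinset]
      exact fun j => hιT (σ j)
    · intro f hfT hfim
      have hmem : ∀ j, f j ∈ T := Fintype.mem_piFinset.mp hfT
      have hninj : ¬ Function.Injective f := by
        intro hinj
        apply hfim
        have hbound : ∀ j, (f j + k).toNat < 2*k+1 := by
          intro j
          have := Finset.mem_Icc.mp (hmem j)
          omega
        have hgf : ∀ j, ι (⟨(f j + k).toNat, hbound j⟩ : Fin (2*k+1)) = f j := by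
          intro j
          have := Finset.mem_Icc.mp (hmem j)
          simp only [hι, iota]
          omega
        have ginj : Function.Injective (fun j => (⟨(f j + k).toNat, hbound j⟩ : Fin (2*k+1))) := by
          intro a b hab
          apply hinj
          rw [← hgf a, ← hgf b]
          exact congrArg ι hab
        have gbij := Finite.injective_iff_bijective.mp ginj
        refine Finset.mem_image.mpr ⟨Equiv.ofBijective _ gbij, Finset.mem_univ _, ?_⟩
        funext j
        simp only [he, Function.comp_apply, Equiv.ofBijective_apply]
        exact hgf j
      simp only [ht]
      rw [vwC_eq_zero_of_not_inj p q f hninj, mul_zero, zero_smul]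
  rw [hB, hC, Finset.sum_image (fun σ _ τ _ h => einj h)]
  have hterm : ∀ σ : Equiv.Perm (Fin (2*k+1)), t (e σ)
      = (((Equiv.Perm.sign σ : ℤ) : K) * (∏ j, v j (ι (σ j)))
          * vwC p q (2*k+1) ι) • Finsupp.single (0:ℤ) (1:K) := by
    intro σ
    simp only [ht, he]
    have hsum : (∑ j, (ι ∘ σ) j) = 0 := by
      simp only [Function.comp_apply]
      rw [Equiv.sum_comp σ ι]; exact sum0
    rw [hsum, vwC_comp]
    congr 1
    simp only [Function.comp_apply]
    ring
  rw [Finset.sum_congr rfl (fun σ _ => hterm σ), ← Finset.sum_smul]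
  congr 1
  have hdet : (Matrix.of (fun j l : Fin (2*k+1) => v j (ι l))).det
      = ∑ σ : Equiv.Perm (Fin (2*k+1)), ((Equiv.Perm.sign σ : ℤ) : K) * ∏ j, v j (ι (σ j)) := by
    rw [← Matrix.det_transpose, Matrix.det_apply']
    rfl
  rw [hdet, Finset.mul_sum]
  exact Finset.sum_congr rfl (fun σ _ => by ring)

end Main
/-- The Filippov fundamental identity for the tuples `(Y₁,…,Y_{n−1})` (the first `n−1`
components of `Y`) and `(X₁,…,X_n)`:
`[Y_1,…,Y_{n−1},[X_1,…,X_n]] = Σ_{k=1}^n [X_1,…,[Y_1,…,Y_{n−1},X_k],…,X_n]`. -/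
noncomputable def holdsFI {K : Type*} [Field K] (p q : K) (n : ℕ) (hn : 0 < n)
    (Y X : Fin n → (ℤ →₀ K)) : Prop :=
  vwBr p q n (Function.update Y ⟨n - 1, Nat.sub_lt hn Nat.one_pos⟩ (vwBr p q n X)) =
    ∑ k : Fin n, vwBr p q n (Function.update X k
      (vwBr p q n (Function.update Y ⟨n - 1, Nat.sub_lt hn Nat.one_pos⟩ (X k))))


section Part3
variable {K : Type*} [Field K]

def kIdx (k : ℕ) : Fin (2*k+1) := ⟨k, by omega⟩

noncomputable def deltaFun (K : Type*) [Field K] (k : ℕ) : Fin (2*k+1) → K :=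
  fun l => if l = kIdx k then 1 else 0

lemma vw_fi (p q : K) (k : ℕ) (Y X : Fin (2*k+1) → (ℤ →₀ K))
    (hY : ∀ j, (Y j).support ⊆ Finset.Icc (-(k:ℤ)) (k:ℤ))
    (hX : ∀ j, (X j).support ⊆ Finset.Icc (-(k:ℤ)) (k:ℤ))
    (hn : 0 < 2*k+1) :
    holdsFI p q (2*k+1) hn Y X := by
  unfold holdsFI
  have hsm : ∀ c : K, (c • Finsupp.single (0:ℤ) (1:K)).support ⊆ Finset.Icc (-(k:ℤ)) (k:ℤ) := by
    intro c x hx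
    have h1 := Finsupp.support_smul hx
    have h2 := Finsupp.support_single_subset h1
    simp only [Finset.mem_singleton] at h2
    subst h2
    simp only [Finset.mem_Icc]
    omega
  have hupdS : ∀ (Z : Fin (2*k+1) → ℤ →₀ K),
      (∀ j, (Z j).support ⊆ Finset.Icc (-(k:ℤ)) (k:ℤ)) →
      ∀ (m : Fin (2*k+1)) (w : ℤ →₀ K), w.support ⊆ Finset.Icc (-(k:ℤ)) (k:ℤ) →
      ∀ j, ((Function.update Z m w) j).support ⊆ Finset.Icc (-(k:ℤ)) (k:ℤ) := by
    intro Z hZ m w hw j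
    by_cases h : j = m
    · subst h; rw [Function.update_self]; exact hw
    · rw [Function.update_of_ne h]; exact hZ j
  have hupdM : ∀ (Z : Fin (2*k+1) → ℤ →₀ K) (m : Fin (2*k+1)) (w : ℤ →₀ K),
      (Matrix.of fun j l : Fin (2*k+1) => (Function.update Z m w) j (iota k l))
        = (Matrix.of fun j l : Fin (2*k+1) => Z j (iota k l)).updateRow m
            (fun l => w (iota k l)) := by
    intro Z m w
    ext j l
    by_cases h : j = m
    · subst h
      rw [Matrix.updateRow_self]
      simp [Function.update_self]
    · rw [Matrix.updateRow_ne h]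
      simp [Function.update_of_ne h]
  have hiotainj : Function.Injective (iota k) := by
    intro a b hab
    simp only [iota] at hab
    exact Fin.ext (by omega)
  have hrow : ∀ c : K, (fun l => (c • Finsupp.single (0:ℤ) (1:K)) (iota k l))
      = c • deltaFun K k := by
    intro c
    funext l
    simp only [Finsupp.smul_apply, Finsupp.single_apply, Pi.smul_apply, smul_eq_mul, deltaFun]
    have hiff : ((0:ℤ) = iota k l) ↔ (l = kIdx k) := by
      constructor
      · intro h
        apply hiotainj
        rw [← h]
        simp [iota, kIdx]
      · rintro rfl
        simp [iota, kIdx]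
    rw [if_congr hiff rfl rfl]
  have hbr : ∀ (Z : Fin (2*k+1) → ℤ →₀ K),
      (∀ j, (Z j).support ⊆ Finset.Icc (-(k:ℤ)) (k:ℤ)) →
      ∀ (m : Fin (2*k+1)) (c : K),
      vwBr p q (2*k+1) (Function.update Z m (c • Finsupp.single (0:ℤ) (1:K)))
        = (vwC p q (2*k+1) (iota k) *
            (c * ((Matrix.of fun j l : Fin (2*k+1) => Z j (iota k l)).updateRow m
              (deltaFun K k)).det)) • Finsupp.single (0:ℤ) (1:K) := by
    intro Z hZ m c
    rw [vwBr_eq_det p q k _ (hupdS Z hZ m _ (hsm c)), hupdM, hrow,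
      Matrix.det_updateRow_smul]
  have hin : ∀ m, vwBr p q (2*k+1)
        (Function.update Y ⟨2*k+1-1, Nat.sub_lt hn Nat.one_pos⟩ (X m))
      = (vwC p q (2*k+1) (iota k) *
          ((Matrix.of fun j l : Fin (2*k+1) => Y j (iota k l)).updateRow
            ⟨2*k+1-1, Nat.sub_lt hn Nat.one_pos⟩
            ((Matrix.of fun j l : Fin (2*k+1) => X j (iota k l)) m)).det) •
        Finsupp.single (0:ℤ) (1:K) := by
    intro m
    rw [vwBr_eq_det p q k _ (hupdS Y hY _ _ (hX m)), hupdM]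
    rfl
  rw [vwBr_eq_det p q k X hX, hbr Y hY _ _]
  rw [Finset.sum_congr rfl (fun m _ => by rw [hin m, hbr X hX m _])]
  rw [← Finset.sum_smul]
  congr 1
  set φ : (Fin (2*k+1) → K) →ₗ[K] K :=
    (Matrix.detRowAlternating :
        (Fin (2*k+1) → K) [⋀^Fin (2*k+1)]→ₗ[K] K).toMultilinearMap.toLinearMap
      (Matrix.of fun j l : Fin (2*k+1) => Y j (iota k l))
      ⟨2*k+1-1, Nat.sub_lt hn Nat.one_pos⟩ with hφdef
  have hφ : ∀ w, φ w = ((Matrix.of fun j l : Fin (2*k+1) => Y j (iota k l)).updateRow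
      ⟨2*k+1-1, Nat.sub_lt hn Nat.one_pos⟩ w).det := fun w => rfl
  have hkey := cramer_key (Matrix.of fun j l : Fin (2*k+1) => X j (iota k l)) φ (deltaFun K k)
  simp only [hφ] at hkey
  have habstract : ∀ (C dX N : K) (Φ D : Fin (2*k+1) → K),
      N * dX = ∑ m, Φ m * D m →
      C * (C * dX * N) = ∑ m, C * (C * Φ m * D m) := by
    intro C dX N Φ D h
    have h2 : ∑ m : Fin (2*k+1), C * (C * Φ m * D m) = C * C * ∑ m, Φ m * D m := by
      rw [Finset.mul_sum]
      exact Finset.sum_congr rfl fun m _ => by ring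
    rw [h2, ← h]; ring
  exact habstract (vwC p q (2*k+1) (iota k))
    ((Matrix.of fun j l : Fin (2*k+1) => X j (iota k l)).det)
    (((Matrix.of fun j l : Fin (2*k+1) => Y j (iota k l)).updateRow
        ⟨2*k+1-1, Nat.sub_lt hn Nat.one_pos⟩ (deltaFun K k)).det)
    (fun m => ((Matrix.of fun j l : Fin (2*k+1) => Y j (iota k l)).updateRow
        ⟨2*k+1-1, Nat.sub_lt hn Nat.one_pos⟩
        ((Matrix.of fun j l : Fin (2*k+1) => X j (iota k l)) m)).det)
    (fun m => ((Matrix.of fun j l : Fin (2*k+1) => X j (iota k l)).updateRow m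
        (deltaFun K k)).det)
    hkey

end Part3

/-- Let `n = 2k+1` be odd with `k ≥ 1` and `S = {−k,…,k}`. The span
`A` of `{e_i : i ∈ S}` is closed under the `(p,q)`-deformed Virasoro–Witt `n`-bracket;
in particular `[e_{−k},…,e_k] = c_n(−k,…,k) • e_0` (since `(−k)+⋯+k = 0 ∈ S`), and the
restricted bracket satisfies the Filippov fundamental identity, so `A` is an `n`-Lie
subalgebra. -/
theorem odd_n_Lie_subalgebra
    {K : Type*} [Field K] (p q : K) (hp : p ≠ 0) (hq : q ≠ 0)
    (k : ℕ) (hk : 1 ≤ k)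
    (A : Submodule K (ℤ →₀ K))
    (hA : A = Submodule.span K
      ((fun i : ℤ => Finsupp.single i (1 : K)) '' ↑(Finset.Icc (-(k : ℤ)) (k : ℤ)))) :
    (∀ v : Fin (2 * k + 1) → (ℤ →₀ K), (∀ j, v j ∈ A) → vwBr p q (2 * k + 1) v ∈ A) ∧
    vwBr p q (2 * k + 1)
        (fun j : Fin (2 * k + 1) => Finsupp.single (-(k : ℤ) + ((j : ℕ) : ℤ)) 1) =
      vwC p q (2 * k + 1) (fun j : Fin (2 * k + 1) => -(k : ℤ) + ((j : ℕ) : ℤ)) •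
        Finsupp.single ((0 : ℤ)) (1 : K) ∧
    (∀ Y X : Fin (2 * k + 1) → (ℤ →₀ K), (∀ j, Y j ∈ A) → (∀ j, X j ∈ A) →
      holdsFI p q (2 * k + 1) (by omega) Y X) := by
  have hmemT : ∀ w : ℤ →₀ K, w ∈ A → w.support ⊆ Finset.Icc (-(k:ℤ)) (k:ℤ) := by
    intro w hw
    rw [hA, ← Finsupp.supported_eq_span_single, Finsupp.mem_supported] at hw
    exact fun x hx => by exact_mod_cast hw hx
  have h0A : Finsupp.single (0:ℤ) (1:K) ∈ A := by
    rw [hA]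
    apply Submodule.subset_span
    exact ⟨0, by simp [Finset.mem_Icc], rfl⟩
  refine ⟨?_, ?_, ?_⟩
  · intro v hv
    rw [vwBr_eq_det p q k v (fun j => hmemT _ (hv j))]
    exact Submodule.smul_mem _ _ h0A
  · have hsupp : ∀ j : Fin (2*k+1),
        (Finsupp.single (-(k:ℤ)+((j:ℕ):ℤ)) (1:K)).support ⊆ Finset.Icc (-(k:ℤ)) (k:ℤ) := by
      intro j x hx
      have h2 := Finsupp.support_single_subset hx
      simp only [Finset.mem_singleton] at h2
      subst h2
      have := j.isLt
      simp only [Finset.mem_Icc]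
      omega
    rw [vwBr_eq_det p q k _ hsupp]
    have hone : (Matrix.of fun j l : Fin (2*k+1) =>
        (Finsupp.single (-(k:ℤ)+((j:ℕ):ℤ)) (1:K)) (iota k l)) = 1 := by
      ext j l
      rw [Matrix.of_apply, Finsupp.single_apply, Matrix.one_apply]
      have hiff : (-(k:ℤ)+((j:ℕ):ℤ) = iota k l) ↔ j = l := by
        constructor
        · intro h
          simp only [iota] at h
          exact Fin.ext (by omega)
        · rintro rfl; rfl
      rw [if_congr hiff rfl rfl]
    rw [hone, Matrix.det_one, mul_one]
    rfl
  · intro Y X hY hX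
    exact vw_fi p q k Y X (fun j => hmemT _ (hY j)) (fun j => hmemT _ (hX j)) _
end
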